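/- arXiv:2111.01781 — 5 statements merged into one kernel-verified Lean document; each statement's English description precedes it below -/
import Mathlib

section
/- Let I be a finite set, H a real Hilbert space, 𝓗 = ⊕_{i∈I} H, and for each i ∈ I let ω_{i,j} ≥ 0 for j ∈ I∖{i} satisfy: for every i, ∑_{j≠i} ω_{i,j} ≤ 1, and for every j, ∑_{i≠j} ω_{i,j} ≤ 1. Then the operator G : 𝓗 → 𝓗 with i-th component G_i(x) = x_i − ∑_{j≠i} ω_{i,j} x_j is monotone, i.e., ∑_{i∈I} ⟨x_i − y_i, (x_i − y_i) − ∑_{j≠i} ω_{i,j}(x_j − y_j)⟩ ≥ 0 for all x, y ∈ 𝓗. -/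
/-! Writing `z = x - y`, the claim is `∑ᵢ ∑_{j ≠ i} ωᵢⱼ ⟪zᵢ, zⱼ⟫ ≤ ∑ᵢ ‖zᵢ‖²`. Each term is at most
`ωᵢⱼ (‖zᵢ‖² + ‖zⱼ‖²) / 2`; the row-sum bound absorbs the `‖zᵢ‖²` halves and the column-sum
bound the `‖zⱼ‖²` halves. -/

open scoped RealInnerProductSpace
open Finset

section OffDiagonal

variable {I : Type*} [Fintype I] [DecidableEq I]

theorem Finset.sum_sum_erase_comm {M : Type*} [AddCommMonoid M] (f : I → I → M) :
    ∑ i, ∑ j ∈ univ.erase i, f i j = ∑ j, ∑ i ∈ univ.erase j, f i j :=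
  sum_comm' fun i j => by simp [eq_comm, and_comm]

theorem sum_sum_erase_mul_le_of_row_sum_le_one {ω : I → I → ℝ}
    (hrow : ∀ i, ∑ j ∈ univ.erase i, ω i j ≤ 1) {a : I → ℝ} (ha : ∀ i, 0 ≤ a i) :
    ∑ i, ∑ j ∈ univ.erase i, ω i j * a i ≤ ∑ i, a i :=
  sum_le_sum fun i _ => by
    rw [← sum_mul]
    exact mul_le_of_le_one_left (ha i) (hrow i)

variable {H : Type*} [NormedAddCommGroup H] [InnerProductSpace ℝ H]

theorem sum_sum_erase_mul_inner_le {ω : I → I → ℝ} (hω : ∀ i j, 0 ≤ ω i j)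
    (hrow : ∀ i, ∑ j ∈ univ.erase i, ω i j ≤ 1)
    (hcol : ∀ j, ∑ i ∈ univ.erase j, ω i j ≤ 1) (z : I → H) :
    ∑ i, ∑ j ∈ univ.erase i, ω i j * ⟪z i, z j⟫ ≤ ∑ i, ‖z i‖ ^ 2 := by
  have hamgm : ∀ i j, ω i j * ⟪z i, z j⟫ ≤ ω i j * ‖z i‖ ^ 2 / 2 + ω i j * ‖z j‖ ^ 2 / 2 := by
    intro i j
    have : ⟪z i, z j⟫ ≤ (‖z i‖ ^ 2 + ‖z j‖ ^ 2) / 2 := by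
      nlinarith [norm_sub_sq_real (z i) (z j), sq_nonneg ‖z i - z j‖]
    nlinarith [hω i j]
  have hrow' := sum_sum_erase_mul_le_of_row_sum_le_one hrow fun i => sq_nonneg ‖z i‖
  have hcol' : ∑ i, ∑ j ∈ univ.erase i, ω i j * ‖z j‖ ^ 2 ≤ ∑ j, ‖z j‖ ^ 2 := by
    rw [sum_sum_erase_comm]
    exact sum_sum_erase_mul_le_of_row_sum_le_one (ω := fun j i => ω i j) hcol
      fun j => sq_nonneg ‖z j‖
  calc ∑ i, ∑ j ∈ univ.erase i, ω i j * ⟪z i, z j⟫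
      ≤ ∑ i, ∑ j ∈ univ.erase i, (ω i j * ‖z i‖ ^ 2 / 2 + ω i j * ‖z j‖ ^ 2 / 2) :=
        sum_le_sum fun i _ => sum_le_sum fun j _ => hamgm i j
    _ = (∑ i, ∑ j ∈ univ.erase i, ω i j * ‖z i‖ ^ 2) / 2
          + (∑ i, ∑ j ∈ univ.erase i, ω i j * ‖z j‖ ^ 2) / 2 := by
        simp only [sum_add_distrib, sum_div]
    _ ≤ ∑ i, ‖z i‖ ^ 2 := by linarith

theorem inner_sub_sum_erase_smul_nonneg {ω : I → I → ℝ} (hω : ∀ i j, 0 ≤ ω i j)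
    (hrow : ∀ i, ∑ j ∈ univ.erase i, ω i j ≤ 1)
    (hcol : ∀ j, ∑ i ∈ univ.erase j, ω i j ≤ 1) (z : I → H) :
    0 ≤ ∑ i, ⟪z i, z i - ∑ j ∈ univ.erase i, ω i j • z j⟫ := by
  have hexpand : ∑ i, ⟪z i, z i - ∑ j ∈ univ.erase i, ω i j • z j⟫
      = ∑ i, ‖z i‖ ^ 2 - ∑ i, ∑ j ∈ univ.erase i, ω i j * ⟪z i, z j⟫ := by
    simp only [inner_sub_right, real_inner_self_eq_norm_sq, inner_sum, real_inner_smul_right,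
      sum_sub_distrib]
  rw [hexpand, sub_nonneg]
  exact sum_sum_erase_mul_inner_le hω hrow hcol z

end OffDiagonal

theorem stmt5_general {I : Type*} [Fintype I] [DecidableEq I]
    {H : Type*} [NormedAddCommGroup H] [InnerProductSpace ℝ H]
    (ω : I → I → ℝ) (hω : ∀ i j, 0 ≤ ω i j)
    (hrow : ∀ i, ∑ j ∈ Finset.univ.erase i, ω i j ≤ 1)
    (hcol : ∀ j, ∑ i ∈ Finset.univ.erase j, ω i j ≤ 1) :
    ∀ x y : I → H,
      0 ≤ ∑ i, ⟪x i - y i, (x i - y i) - ∑ j ∈ Finset.univ.erase i, ω i j • (x j - y j)⟫ :=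
  fun x y => inner_sub_sum_erase_smul_nonneg hω hrow hcol (x - y)

theorem stmt5 {I : Type*} [Fintype I] [Nonempty I] [DecidableEq I]
    {H : Type*} [NormedAddCommGroup H] [InnerProductSpace ℝ H]
    (ω : I → I → ℝ) (hω : ∀ i j, 0 ≤ ω i j)
    (hrow : ∀ i, ∑ j ∈ Finset.univ.erase i, ω i j ≤ 1)
    (hcol : ∀ j, ∑ i ∈ Finset.univ.erase j, ω i j ≤ 1) :
    ∀ x y : I → H,
      0 ≤ ∑ i, ⟪x i - y i, (x i - y i) - ∑ j ∈ Finset.univ.erase i, ω i j • (x j - y j)⟫ :=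
  stmt5_general ω hω hrow hcol
end

section
/- Let I be a finite set, (H_i)_{i∈I} and (G_k)_{k∈K} finite families of real Hilbert spaces with direct sums 𝓗 and 𝓖. For each i ∈ I let φ_i : H_i → (−∞,∞] be proper lower semicontinuous convex; for each i, let f_i : 𝓗 → ℝ be such that f_i(·; x_{∖i}) is convex and Gâteaux differentiable in the i-th variable with partial gradient ∇_i f_i(x); for each k ∈ K let g_k : G_k → (−∞,∞] be proper lsc convex and L_k : 𝓗 → G_k bounded linear. Suppose (x̄, v̄*) ∈ 𝓗 ⊕ 𝓖 satisfies: for every i ∈ I, −∇_i f_i(x̄) − ∑_{k∈K} Π_i(L_k* v̄_k*) ∈ ∂φ_i(x̄_i), and for every k ∈ K, L_k x̄ ∈ ∂g_k*(v̄_k*). Then x̄ is a Nash equilibrium: for every i ∈ I, x̄_i minimizes the function x_i ↦ φ_i(x_i) + f_i(x_i; x̄_{∖i}) + ∑_{k∈K} g_k(L_k(x_i; x̄_{∖i})). -/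
open scoped RealInnerProductSpace

/-- Subdifferential of an extended-real-valued function on a real Hilbert space. -/
def ESubdiff {E : Type*} [NormedAddCommGroup E] [InnerProductSpace ℝ E]
    (f : E → EReal) (x : E) : Set E :=
  {u | ∀ y, f x + ((⟪u, y - x⟫ : ℝ) : EReal) ≤ f y}

/-- Fenchel conjugate of an extended-real-valued function. -/
noncomputable def EConj {E : Type*} [NormedAddCommGroup E] [InnerProductSpace ℝ E]
    (f : E → EReal) (u : E) : EReal :=
  ⨆ y, (((⟪u, y⟫ : ℝ) : EReal) - f y)

/-!
At `x̄ᵢ` each of the three convex terms of player `i`'s objective has an explicit subgradient: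
`uᵢ = -∇ᵢfᵢ(x̄) - ∑ₖ Πᵢ(Lₖ* v̄ₖ)` for `φᵢ` by hypothesis, `∇ᵢfᵢ(x̄)` for the smooth term by the
first-order characterisation of convexity, and `Πᵢ(Lₖ* v̄ₖ)` for `xᵢ ↦ gₖ(Lₖ(xᵢ; x̄₋ᵢ))`, because
`Lₖ x̄ ∈ ∂gₖ*(v̄ₖ)` forces `v̄ₖ ∈ ∂gₖ(Lₖ x̄)` once `gₖ = gₖ**`. These subgradients add up to zero,
so summing the subgradient inequalities gives minimality of `x̄ᵢ`.

The inequality `g ≤ g**` (Fenchel–Moreau) comes from separating a point below the graph of `g`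
from its closed convex epigraph; a vertical separating hyperplane is tilted by an affine minorant
of `g`, obtained by the same separation at a point of the effective domain.
-/

theorem ConvexOn.add_inner_le_of_hasGradientAt {F : Type*} [NormedAddCommGroup F]
    [InnerProductSpace ℝ F] [CompleteSpace F] {ψ : F → ℝ} {a u : F}
    (hψ : ConvexOn ℝ Set.univ ψ) (hu : HasGradientAt ψ u a) (b : F) :
    ψ a + ⟪u, b - a⟫ ≤ ψ b := by
  have hline : HasDerivAt (ψ ∘ AffineMap.lineMap (k := ℝ) a b) ⟪u, b - a⟫ 0 := by
    simpa using hu.hasFDerivAt.comp_hasDerivAt_of_eq (0 : ℝ) AffineMap.hasDerivAt_lineMap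
      (AffineMap.lineMap_apply_zero a b).symm
  have hslope := (hψ.comp_affineMap (AffineMap.lineMap a b)).le_slope_of_hasDerivAt
    (Set.mem_univ 0) (Set.mem_univ 1) zero_lt_one hline
  simp only [slope, sub_zero, inv_one, Function.comp_apply, AffineMap.lineMap_apply_one,
    AffineMap.lineMap_apply_zero, vsub_eq_sub, smul_eq_mul, one_mul] at hslope
  linarith

theorem PiLp.inner_toLp_update_sub {ι : Type*} [Fintype ι] [DecidableEq ι] {H : ι → Type*}
    [∀ i, NormedAddCommGroup (H i)] [∀ i, InnerProductSpace ℝ (H i)]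
    (w x : PiLp 2 H) (i : ι) (t : H i) :
    ⟪w, WithLp.toLp 2 (Function.update x i t) - x⟫ = ⟪w i, t - x i⟫ := by
  rw [PiLp.inner_apply, Finset.sum_eq_single i]
  · simp
  · intro j _ hj
    simp [Function.update_of_ne hj]
  · simp

@[norm_cast]
theorem EReal.coe_finset_sum {ι : Type*} (s : Finset ι) (a : ι → ℝ) :
    ((∑ k ∈ s, a k : ℝ) : EReal) = ∑ k ∈ s, (a k : EReal) :=
  map_sum (⟨⟨(↑), EReal.coe_zero⟩, EReal.coe_add⟩ : ℝ →+ EReal) a s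

section Epigraph

variable {E : Type*} {g : E → EReal}

def realEpigraph (g : E → EReal) : Set (E × ℝ) := {p | g p.1 ≤ p.2}

theorem isClosed_realEpigraph [TopologicalSpace E] (hg : LowerSemicontinuous g) :
    IsClosed (realEpigraph g) :=
  hg.isClosed_epigraph.preimage
    (continuous_fst.prodMk (continuous_coe_real_ereal.comp continuous_snd))

theorem convex_realEpigraph [AddCommGroup E] [Module ℝ E]
    (hg : ∀ (x y : E) (a b : ℝ), 0 ≤ a → 0 ≤ b → a + b = 1 →
      g (a • x + b • y) ≤ (a : EReal) * g x + (b : EReal) * g y) :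
    Convex ℝ (realEpigraph g) := by
  rintro p (hp : g p.1 ≤ p.2) q (hq : g q.1 ≤ q.2) a b ha hb hab
  calc g (a • p.1 + b • q.1) ≤ (a : EReal) * g p.1 + (b : EReal) * g q.1 :=
        hg _ _ _ _ ha hb hab
    _ ≤ (a : EReal) * p.2 + (b : EReal) * q.2 := by gcongr
    _ = ((a * p.2 + b * q.2 : ℝ) : EReal) := by norm_cast

end Epigraph

section FenchelMoreau

variable {E : Type*} [NormedAddCommGroup E] [InnerProductSpace ℝ E] {g : E → EReal}

theorem sub_le_econj (v z : E) : ((⟪v, z⟫ : ℝ) : EReal) - g z ≤ EConj g v :=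
  le_iSup (fun z => ((⟪v, z⟫ : ℝ) : EReal) - g z) z

def IsAffineMinorant (g : E → EReal) (w : E) (c : ℝ) : Prop :=
  ∀ z, ((⟪w, z⟫ + c : ℝ) : EReal) ≤ g z

theorem IsAffineMinorant.le {w : E} {c : ℝ} (h : IsAffineMinorant g w c) {p : E × ℝ}
    (hp : p ∈ realEpigraph g) : ⟪w, p.1⟫ + c ≤ p.2 :=
  EReal.coe_le_coe_iff.1 ((h p.1).trans hp)

theorem IsAffineMinorant.econj_le {w : E} {c : ℝ} (h : IsAffineMinorant g w c) :
    EConj g w ≤ ((-c : ℝ) : EReal) := by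
  refine iSup_le fun z => EReal.sub_le_of_le_add ?_
  calc ((⟪w, z⟫ : ℝ) : EReal) = ((-c : ℝ) : EReal) + ((⟪w, z⟫ + c : ℝ) : EReal) := by
        norm_cast; ring
    _ ≤ ((-c : ℝ) : EReal) + g z := by gcongr; exact h z

theorem isAffineMinorant_of_forall_realEpigraph_lt {u : E} {α c : ℝ} (hα : 0 < α)
    (h : ∀ p ∈ realEpigraph g, c < ⟪u, p.1⟫ + α * p.2) :
    IsAffineMinorant g (-α⁻¹ • u) (c / α) := by
  intro z
  refine EReal.le_of_forall_lt_iff_le.1 fun s hs => ?_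
  have hzs := h (z, s) hs.le
  rw [real_inner_smul_left, EReal.coe_le_coe_iff, neg_mul, ← sub_eq_neg_add, inv_mul_eq_div,
    ← sub_div, div_le_iff₀ hα]
  linarith

theorem nonneg_of_forall_realEpigraph_lt {u : E} {α c : ℝ}
    (h : ∀ p ∈ realEpigraph g, c < ⟪u, p.1⟫ + α * p.2) {q : E × ℝ} (hq : q ∈ realEpigraph g) :
    0 ≤ α := by
  by_contra! hα
  set s := max q.2 ((c - ⟪u, q.1⟫) / α)
  have hqs : (q.1, s) ∈ realEpigraph g :=
    le_trans hq (EReal.coe_le_coe_iff.2 (le_max_left _ _))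
  have hαs : α * s ≤ c - ⟪u, q.1⟫ := by
    rw [← div_le_iff_of_neg' hα]
    exact le_max_right _ _
  linarith [h _ hqs]

variable [CompleteSpace E]

theorem exists_separation_of_notMem_realEpigraph (hconv : Convex ℝ (realEpigraph g))
    (hclosed : IsClosed (realEpigraph g)) {p : E × ℝ} (hp : p ∉ realEpigraph g) :
    ∃ (u : E) (α c : ℝ), ⟪u, p.1⟫ + α * p.2 < c ∧
      ∀ q ∈ realEpigraph g, c < ⟪u, q.1⟫ + α * q.2 := by
  obtain ⟨f, c, hfp, hfS⟩ := geometric_hahn_banach_point_closed hconv hclosed hp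
  set u := (InnerProductSpace.toDual ℝ E).symm (f ∘L ContinuousLinearMap.inl ℝ E ℝ)
  have hf : ∀ q : E × ℝ, f q = ⟪u, q.1⟫ + f (0, 1) * q.2 := by
    rintro ⟨z, s⟩
    calc f (z, s) = f ((z, 0) + s • (0, 1)) := by simp
      _ = ⟪u, z⟫ + f (0, 1) * s := by
        rw [map_add, map_smul, smul_eq_mul, mul_comm, InnerProductSpace.toDual_symm_apply]
        rfl
  exact ⟨u, f (0, 1), c, hf p ▸ hfp, fun q hq => hf q ▸ hfS q hq⟩

theorem exists_isAffineMinorant_lt_of_ne_top (hconv : Convex ℝ (realEpigraph g))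
    (hclosed : IsClosed (realEpigraph g)) {y : E} {r : ℝ} (hr : (r : EReal) < g y)
    (hy : g y ≠ ⊤) : ∃ w c, IsAffineMinorant g w c ∧ r < ⟪w, y⟫ + c := by
  obtain ⟨u, α, c, hlt, hgt⟩ :=
    exists_separation_of_notMem_realEpigraph hconv hclosed (p := (y, r)) hr.not_ge
  lift g y to ℝ using ⟨hy, hr.ne_bot⟩ with s hs
  have hys : c < ⟪u, y⟫ + α * s := hgt (y, s) hs.ge
  have hrs : r < s := EReal.coe_lt_coe_iff.1 (hs ▸ hr)
  change ⟪u, y⟫ + α * r < c at hlt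
  have hα : 0 < α := by nlinarith
  refine ⟨_, _, isAffineMinorant_of_forall_realEpigraph_lt hα hgt, ?_⟩
  rw [real_inner_smul_left, neg_mul, ← sub_eq_neg_add, inv_mul_eq_div, ← sub_div, lt_div_iff₀ hα]
  linarith

theorem exists_isAffineMinorant_lt (hconv : Convex ℝ (realEpigraph g))
    (hclosed : IsClosed (realEpigraph g)) (hproper : ∃ z, g z ≠ ⊤) (hbot : ∀ z, g z ≠ ⊥)
    {y : E} {r : ℝ} (hr : (r : EReal) < g y) :
    ∃ w c, IsAffineMinorant g w c ∧ r < ⟪w, y⟫ + c := by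
  obtain ⟨z₀, hz₀⟩ := hproper
  lift g z₀ to ℝ using ⟨hz₀, hbot z₀⟩ with s₀ hs₀
  obtain ⟨v₀, c₀, hv₀, -⟩ := exists_isAffineMinorant_lt_of_ne_top hconv hclosed
    (r := s₀ - 1) (hs₀ ▸ EReal.coe_lt_coe_iff.2 (sub_one_lt s₀)) (hs₀ ▸ EReal.coe_ne_top s₀)
  obtain ⟨u, α, c, hlt, hgt⟩ :=
    exists_separation_of_notMem_realEpigraph hconv hclosed (p := (y, r)) hr.not_ge
  change ⟪u, y⟫ + α * r < c at hlt
  have hα : 0 ≤ α := nonneg_of_forall_realEpigraph_lt hgt (q := (z₀, s₀)) hs₀.ge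
  -- Tilting the (possibly vertical) separating hyperplane by a small multiple `t` of the
  -- minorant `v₀` makes it non-vertical while still passing above `(y, r)`.
  set d := c - ⟪u, y⟫ - α * r
  set m := r - ⟪v₀, y⟫ - c₀
  set t := d / (|m| + 1)
  have hd : 0 < d := by simp only [d]; linarith
  have ht : 0 < t := by positivity
  have htm : t * m < d := by
    calc t * m ≤ t * |m| := mul_le_mul_of_nonneg_left (le_abs_self m) ht.le
      _ < t * (|m| + 1) := by linarith
      _ = d := div_mul_cancel₀ d (by positivity)
  have htilt : ∀ q ∈ realEpigraph g, c + t * c₀ < ⟪u - t • v₀, q.1⟫ + (α + t) * q.2 := by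
    intro q hq
    have hmin := mul_le_mul_of_nonneg_left (hv₀.le hq) ht.le
    rw [inner_sub_left, real_inner_smul_left]
    linarith [hgt q hq]
  refine ⟨_, _, isAffineMinorant_of_forall_realEpigraph_lt (by positivity) htilt, ?_⟩
  rw [real_inner_smul_left, neg_mul, ← sub_eq_neg_add, inv_mul_eq_div, ← sub_div,
    lt_div_iff₀ (by positivity), inner_sub_left, real_inner_smul_left]
  simp only [d, m] at htm
  linarith

theorem le_econj_econj (hconv : Convex ℝ (realEpigraph g)) (hclosed : IsClosed (realEpigraph g))
    (hproper : ∃ z, g z ≠ ⊤) (hbot : ∀ z, g z ≠ ⊥) (y : E) : g y ≤ EConj (EConj g) y := by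
  refine EReal.ge_of_forall_gt_iff_ge.1 fun r hr => ?_
  obtain ⟨w, c, hwc, hr'⟩ := exists_isAffineMinorant_lt hconv hclosed hproper hbot hr
  calc (r : EReal) ≤ ((⟪y, w⟫ - -c : ℝ) : EReal) := by
        rw [real_inner_comm, sub_neg_eq_add]; exact_mod_cast hr'.le
    _ ≤ ((⟪y, w⟫ : ℝ) : EReal) - EConj g w := by
        rw [EReal.coe_sub]; exact EReal.sub_le_sub le_rfl hwc.econj_le
    _ ≤ EConj (EConj g) y := sub_le_econj (g := EConj g) y w

theorem mem_esubdiff_of_mem_esubdiff_econj (hconv : Convex ℝ (realEpigraph g))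
    (hclosed : IsClosed (realEpigraph g)) (hproper : ∃ z, g z ≠ ⊤) (hbot : ∀ z, g z ≠ ⊥)
    {y v : E} (h : y ∈ ESubdiff (EConj g) v) : v ∈ ESubdiff g y := by
  have hbiconj := le_econj_econj hconv hclosed hproper hbot
  obtain ⟨z₀, hz₀⟩ := hproper
  have hne_top : EConj g v ≠ ⊤ := by
    intro htop
    refine hbot z₀ (le_bot_iff.1 ((hbiconj z₀).trans (iSup_le fun w => ?_)))
    have hw := h w
    rw [htop, EReal.top_add_coe, top_le_iff] at hw
    simp [hw]
  have hne_bot : EConj g v ≠ ⊥ := by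
    lift g z₀ to ℝ using ⟨hz₀, hbot z₀⟩ with s₀ hs₀
    exact ne_bot_of_le_ne_bot (by rw [← hs₀]; exact EReal.coe_ne_bot _) (sub_le_econj v z₀)
  lift EConj g v to ℝ using ⟨hne_top, hne_bot⟩ with s hs
  have hy : g y ≤ ((⟪v, y⟫ - s : ℝ) : EReal) := by
    refine (hbiconj y).trans (iSup_le fun w => EReal.sub_le_of_le_add' ?_)
    calc ((⟪y, w⟫ : ℝ) : EReal) = (s + ⟪y, w - v⟫ : ℝ) + ((⟪v, y⟫ - s : ℝ) : EReal) := by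
          norm_cast; rw [inner_sub_right, real_inner_comm v y]; ring
      _ ≤ EConj g w + ((⟪v, y⟫ - s : ℝ) : EReal) := by gcongr; exact_mod_cast hs ▸ h w
  intro z
  calc g y + ((⟪v, z - y⟫ : ℝ) : EReal)
      ≤ ((⟪v, y⟫ - s : ℝ) : EReal) + ((⟪v, z - y⟫ : ℝ) : EReal) := by gcongr
    _ = ((⟪v, z⟫ : ℝ) : EReal) - s := by norm_cast; rw [inner_sub_right]; ring
    _ ≤ g z := EReal.sub_le_of_le_add' ((EReal.sub_le_iff_le_add (.inr (EReal.coe_ne_top _))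
        (.inr (EReal.coe_ne_bot _))).1 (hs ▸ sub_le_econj v z))

end FenchelMoreau

theorem stmt6_general
    {I K : Type*} [Fintype I] [Fintype K] [DecidableEq I]
    {H : I → Type*} [∀ i, NormedAddCommGroup (H i)] [∀ i, InnerProductSpace ℝ (H i)]
    [∀ i, CompleteSpace (H i)] [CompleteSpace (PiLp 2 H)]
    {G : K → Type*} [∀ k, NormedAddCommGroup (G k)] [∀ k, InnerProductSpace ℝ (G k)]
    [∀ k, CompleteSpace (G k)]
    (φ : ∀ i, H i → EReal)
    (f : I → PiLp 2 H → ℝ)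
    (grad : ∀ i, PiLp 2 H → H i)
    (hfconv : ∀ i (x : PiLp 2 H),
      ConvexOn ℝ Set.univ (fun t : H i => f i (WithLp.toLp 2 (Function.update x i t))))
    (hfgrad : ∀ i (x : PiLp 2 H),
      HasGradientAt (fun t : H i => f i (WithLp.toLp 2 (Function.update x i t))) (grad i x) (x i))
    (g : ∀ k, G k → EReal)
    (hgproper : ∀ k, ∃ y, g k y ≠ ⊤) (hgbot : ∀ k y, g k y ≠ ⊥)
    (hglsc : ∀ k, LowerSemicontinuous (g k))
    (hgconv : ∀ k (x y : G k) (a b : ℝ), 0 ≤ a → 0 ≤ b → a + b = 1 →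
      g k (a • x + b • y) ≤ (a : EReal) * g k x + (b : EReal) * g k y)
    (L : ∀ k, PiLp 2 H →L[ℝ] G k)
    (xbar : PiLp 2 H) (vbar : ∀ k, G k)
    (h1 : ∀ i,
      (-(grad i xbar) - ∑ k, (ContinuousLinearMap.adjoint (L k)) (vbar k) i)
        ∈ ESubdiff (φ i) (xbar i))
    (h2 : ∀ k, L k xbar ∈ ESubdiff (EConj (g k)) (vbar k)) :
    ∀ i (t : H i),
      φ i (xbar i) + ((f i xbar : ℝ) : EReal) + ∑ k, g k (L k xbar)
        ≤ φ i t + ((f i (WithLp.toLp 2 (Function.update xbar i t)) : ℝ) : EReal)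
            + ∑ k, g k (L k (WithLp.toLp 2 (Function.update xbar i t))) := by
  intro i t
  set y : PiLp 2 H := WithLp.toLp 2 (Function.update xbar i t)
  have hf : f i xbar + ⟪grad i xbar, t - xbar i⟫ ≤ f i y := by
    simpa using (hfconv i xbar).add_inner_le_of_hasGradientAt (hfgrad i xbar) t
  have hg : ∀ k, g k (L k xbar) + ((⟪(L k).adjoint (vbar k) i, t - xbar i⟫ : ℝ) : EReal)
      ≤ g k (L k y) := by
    intro k
    have hsub := mem_esubdiff_of_mem_esubdiff_econj (convex_realEpigraph (hgconv k))
      (isClosed_realEpigraph (hglsc k)) (hgproper k) (hgbot k) (h2 k) (L k y)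
    rwa [← map_sub, ← ContinuousLinearMap.adjoint_inner_left, PiLp.inner_toLp_update_sub] at hsub
  have hcancel : ((f i xbar : ℝ) : EReal)
      = ((⟪-(grad i xbar) - ∑ k, (L k).adjoint (vbar k) i, t - xbar i⟫ : ℝ) : EReal)
        + ((f i xbar + ⟪grad i xbar, t - xbar i⟫ : ℝ) : EReal)
        + ∑ k, ((⟪(L k).adjoint (vbar k) i, t - xbar i⟫ : ℝ) : EReal) := by
    rw [← EReal.coe_finset_sum]
    norm_cast
    rw [inner_sub_left, inner_neg_left, sum_inner]
    ring
  calc φ i (xbar i) + ((f i xbar : ℝ) : EReal) + ∑ k, g k (L k xbar)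
      = φ i (xbar i)
          + ((⟪-(grad i xbar) - ∑ k, (L k).adjoint (vbar k) i, t - xbar i⟫ : ℝ) : EReal)
        + ((f i xbar + ⟪grad i xbar, t - xbar i⟫ : ℝ) : EReal)
        + ∑ k, (g k (L k xbar) + ((⟪(L k).adjoint (vbar k) i, t - xbar i⟫ : ℝ) : EReal)) := by
        rw [hcancel, Finset.sum_add_distrib]
        abel
    _ ≤ φ i t + ((f i y : ℝ) : EReal) + ∑ k, g k (L k y) :=
        add_le_add (add_le_add (h1 i t) (mod_cast hf)) (Finset.sum_le_sum fun k _ => hg k)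

theorem stmt6
    {I K : Type*} [Fintype I] [Fintype K] [DecidableEq I]
    {H : I → Type*} [∀ i, NormedAddCommGroup (H i)] [∀ i, InnerProductSpace ℝ (H i)]
    [∀ i, CompleteSpace (H i)] [CompleteSpace (PiLp 2 H)]
    {G : K → Type*} [∀ k, NormedAddCommGroup (G k)] [∀ k, InnerProductSpace ℝ (G k)]
    [∀ k, CompleteSpace (G k)]
    (φ : ∀ i, H i → EReal)
    (hφproper : ∀ i, ∃ x, φ i x ≠ ⊤) (hφbot : ∀ i x, φ i x ≠ ⊥)
    (hφlsc : ∀ i, LowerSemicontinuous (φ i))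
    (hφconv : ∀ i (x y : H i) (a b : ℝ), 0 ≤ a → 0 ≤ b → a + b = 1 →
      φ i (a • x + b • y) ≤ (a : EReal) * φ i x + (b : EReal) * φ i y)
    (f : I → PiLp 2 H → ℝ)
    (grad : ∀ i, PiLp 2 H → H i)
    (hfconv : ∀ i (x : PiLp 2 H),
      ConvexOn ℝ Set.univ (fun t : H i => f i (WithLp.toLp 2 (Function.update x i t))))
    (hfgrad : ∀ i (x : PiLp 2 H),
      HasGradientAt (fun t : H i => f i (WithLp.toLp 2 (Function.update x i t))) (grad i x) (x i))
    (g : ∀ k, G k → EReal)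
    (hgproper : ∀ k, ∃ y, g k y ≠ ⊤) (hgbot : ∀ k y, g k y ≠ ⊥)
    (hglsc : ∀ k, LowerSemicontinuous (g k))
    (hgconv : ∀ k (x y : G k) (a b : ℝ), 0 ≤ a → 0 ≤ b → a + b = 1 →
      g k (a • x + b • y) ≤ (a : EReal) * g k x + (b : EReal) * g k y)
    (L : ∀ k, PiLp 2 H →L[ℝ] G k)
    (xbar : PiLp 2 H) (vbar : ∀ k, G k)
    (h1 : ∀ i,
      (-(grad i xbar) - ∑ k, (ContinuousLinearMap.adjoint (L k)) (vbar k) i)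
        ∈ ESubdiff (φ i) (xbar i))
    (h2 : ∀ k, L k xbar ∈ ESubdiff (EConj (g k)) (vbar k)) :
    ∀ i (t : H i),
      φ i (xbar i) + ((f i xbar : ℝ) : EReal) + ∑ k, g k (L k xbar)
        ≤ φ i t + ((f i (WithLp.toLp 2 (Function.update xbar i t)) : ℝ) : EReal)
            + ∑ k, g k (L k (WithLp.toLp 2 (Function.update xbar i t))) :=
  stmt6_general φ f grad hfconv hfgrad g hgproper hgbot hglsc hgconv L xbar vbar h1 h2
end

section
/- Let H be a real Hilbert space and φ : H → (−∞,∞] a proper lower semicontinuous convex function which is supercoercive, i.e., φ(x)/‖x‖ → ∞ as ‖x‖ → ∞. Then the subdifferential ∂φ : H → 2^H is surjective: for every x* ∈ H there exists x ∈ H with x* ∈ ∂φ(x). -/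
open scoped RealInnerProductSpace
open Filter

private lemma ereal_mul_le_mul {a : ℝ} (ha : 0 ≤ a) {x y : EReal} (h : x ≤ y) :
    (a : EReal) * x ≤ (a : EReal) * y := by
  rcases ha.eq_or_lt with rfl | hpos
  · simp
  · induction x using EReal.rec with
    | bot => simp [EReal.coe_mul_bot_of_pos hpos]
    | top => simp [EReal.coe_mul_top_of_pos hpos, top_le_iff.1 h, EReal.coe_mul_top_of_pos hpos]
    | coe x =>
      induction y using EReal.rec with
      | bot => exact absurd h (by simp)
      | top => simp [EReal.coe_mul_top_of_pos hpos]
      | coe y =>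
        rw [← EReal.coe_mul, ← EReal.coe_mul, EReal.coe_le_coe_iff]
        exact mul_le_mul_of_nonneg_left (EReal.coe_le_coe_iff.1 h) ha

private lemma isClosed_le_of_lsc {α : Type*} [TopologicalSpace α] {f : α → EReal}
    (hf : LowerSemicontinuous f) {c : α → ℝ} (hc : Continuous c) :
    IsClosed {x | f x ≤ (c x : EReal)} := by
  rw [← isOpen_compl_iff]
  rw [isOpen_iff_mem_nhds]
  intro x hx
  simp only [Set.mem_compl_iff, Set.mem_setOf_eq, not_le] at hx
  obtain ⟨t, ht1, ht2⟩ := EReal.exists_between_coe_real hx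
  have h1 : ∀ᶠ x' in nhds x, (t : EReal) < f x' := hf x t ht2
  have h2 : ∀ᶠ x' in nhds x, c x' < t := by
    have : IsOpen {x' | c x' < t} := isOpen_lt hc continuous_const
    exact this.mem_nhds (by simpa using EReal.coe_lt_coe_iff.1 ht1)
  filter_upwards [h1, h2] with x' hx1 hx2
  simp only [Set.mem_compl_iff, Set.mem_setOf_eq, not_le]
  exact lt_trans (EReal.coe_lt_coe_iff.2 hx2) hx1

private lemma exists_affine_minorant {H : Type*} [NormedAddCommGroup H] [NormedSpace ℝ H]
    (φ : H → EReal) (hproper : ∃ x, φ x ≠ ⊤) (hbot : ∀ x, φ x ≠ ⊥)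
    (hlsc : LowerSemicontinuous φ)
    (hconv : ∀ (x y : H) (a b : ℝ), 0 ≤ a → 0 ≤ b → a + b = 1 →
      φ (a • x + b • y) ≤ (a : EReal) * φ x + (b : EReal) * φ y) :
    ∃ C₀ C₁ : ℝ, 0 ≤ C₁ ∧ ∀ x, ((-(C₀ + C₁ * ‖x‖) : ℝ) : EReal) ≤ φ x := by
  obtain ⟨x₀, hx₀⟩ := hproper
  set r₀ : ℝ := (φ x₀).toReal with hr₀def
  have hr₀ : φ x₀ = (r₀ : EReal) := (EReal.coe_toReal hx₀ (hbot x₀)).symm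
  set epi : Set (H × ℝ) := {p | φ p.1 ≤ (p.2 : EReal)} with hepi
  have hlsc' : LowerSemicontinuous (fun p : H × ℝ => φ p.1) := by
    intro p y hy
    exact (continuous_fst.tendsto p).eventually (hlsc p.1 y hy)
  have hclosed : IsClosed epi := isClosed_le_of_lsc hlsc' continuous_snd
  have hcvx : Convex ℝ epi := by
    rintro ⟨p1, p2⟩ hp ⟨q1, q2⟩ hq a b ha hb hab
    simp only [hepi, Set.mem_setOf_eq] at *
    have h1 : φ (a • p1 + b • q1) ≤ (a : EReal) * φ p1 + (b : EReal) * φ q1 :=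
      hconv p1 q1 a b ha hb hab
    refine h1.trans ?_
    calc (a : EReal) * φ p1 + (b : EReal) * φ q1
        ≤ (a : EReal) * (p2 : EReal) + (b : EReal) * (q2 : EReal) :=
          add_le_add (ereal_mul_le_mul ha hp) (ereal_mul_le_mul hb hq)
      _ = ((a * p2 + b * q2 : ℝ) : EReal) := by rw [EReal.coe_add, EReal.coe_mul, EReal.coe_mul]
      _ = (((a • (p1, p2) + b • (q1, q2) : H × ℝ).2 : ℝ) : EReal) := by
          simp [Prod.smul_def, smul_eq_mul]
  have hp₀ : ((x₀, r₀ - 1) : H × ℝ) ∉ epi := by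
    simp only [hepi, Set.mem_setOf_eq, hr₀, not_le, EReal.coe_lt_coe_iff]
    linarith
  obtain ⟨f, c, hfc, hsep⟩ := geometric_hahn_banach_point_closed hcvx hclosed hp₀
  set a : ℝ := f (0, 1) with hadef
  set g : H → ℝ := fun x => f (x, 0) with hgdef
  have key : ∀ (x : H) (t : ℝ), f (x, t) = g x + t * a := by
    intro x t
    have h1 : ((x, t) : H × ℝ) = (x, 0) + t • (0, 1) := by
      simp [Prod.ext_iff]
    rw [h1, map_add, map_smul]
    simp [hgdef, hadef, smul_eq_mul]
  have hmem₀ : ((x₀, r₀) : H × ℝ) ∈ epi := by simp [hepi, hr₀]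
  have h₁ : c < g x₀ + r₀ * a := by have := hsep _ hmem₀; rwa [key] at this
  have h₂ : g x₀ + (r₀ - 1) * a < c := by rwa [key] at hfc
  have ha : 0 < a := by nlinarith
  have hminor : ∀ x, (((c - g x) / a : ℝ) : EReal) ≤ φ x := by
    intro x
    by_cases hx : φ x = ⊤
    · rw [hx]; exact le_top
    · have hr : φ x = ((φ x).toReal : EReal) := (EReal.coe_toReal hx (hbot x)).symm
      have hmem : ((x, (φ x).toReal) : H × ℝ) ∈ epi := by simp [hepi, ← hr]
      have := hsep _ hmem
      rw [key] at this
      rw [hr, EReal.coe_le_coe_iff, div_le_iff₀ ha]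
      linarith
  have hgb : ∀ x : H, |g x| ≤ ‖f‖ * ‖x‖ := by
    intro x
    have h1 : ‖f (x, 0)‖ ≤ ‖f‖ * ‖((x, 0) : H × ℝ)‖ := f.le_opNorm _
    have h2 : ‖((x, 0) : H × ℝ)‖ = ‖x‖ := by
      simp [Prod.norm_def]
    rwa [h2, Real.norm_eq_abs] at h1
  refine ⟨|c| / a, ‖f‖ / a, by positivity, fun x => ?_⟩
  refine le_trans ?_ (hminor x)
  rw [EReal.coe_le_coe_iff]
  have h3 : -(|c| + ‖f‖ * ‖x‖) ≤ c - g x := by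
    have h4 := (abs_le.1 (hgb x)).2
    have h5 := neg_abs_le c
    linarith
  calc -(|c| / a + ‖f‖ / a * ‖x‖) = (-(|c| + ‖f‖ * ‖x‖)) / a := by ring
    _ ≤ (c - g x) / a := div_le_div_of_nonneg_right h3 ha.le

theorem stmt8 {H : Type*} [NormedAddCommGroup H] [InnerProductSpace ℝ H] [CompleteSpace H]
    (φ : H → EReal)
    (hproper : ∃ x, φ x ≠ ⊤) (hbot : ∀ x, φ x ≠ ⊥)
    (hlsc : LowerSemicontinuous φ)
    (hconv : ∀ (x y : H) (a b : ℝ), 0 ≤ a → 0 ≤ b → a + b = 1 →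
      φ (a • x + b • y) ≤ (a : EReal) * φ x + (b : EReal) * φ y)
    (hsc : ∀ M : ℝ, ∃ R : ℝ, ∀ x, R ≤ ‖x‖ → ((M * ‖x‖ : ℝ) : EReal) ≤ φ x) :
    ∀ u : H, ∃ x : H, ∀ y : H, φ x + ((⟪u, y - x⟫ : ℝ) : EReal) ≤ φ y := by
  intro u
  obtain ⟨C₀, C₁, hC₁, hminor⟩ := exists_affine_minorant φ hproper hbot hlsc hconv
  obtain ⟨R₀, hR₀⟩ := hsc ‖u‖
  obtain ⟨R₁, hR₁⟩ := hsc (‖u‖ + 1)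
  -- the set of "achievable slack levels"
  set V : Set ℝ := {r | ∃ x, φ x ≤ ((r + ⟪u, x⟫ : ℝ) : EReal)} with hV
  obtain ⟨x₀, hx₀⟩ := hproper
  have hx₀r : φ x₀ = (((φ x₀).toReal : ℝ) : EReal) := (EReal.coe_toReal hx₀ (hbot x₀)).symm
  have hVne : V.Nonempty := by
    refine ⟨(φ x₀).toReal - ⟪u, x₀⟫, x₀, ?_⟩
    rw [hx₀r, EReal.coe_le_coe_iff]
    ring_nf
    exact le_refl _
  have hVbdd : BddBelow V := by
    refine ⟨min 0 (-(C₀ + (C₁ + ‖u‖) * max R₀ 0)), fun r hr => ?_⟩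
    obtain ⟨x, hx⟩ := hr
    have hiu : ⟪u, x⟫ ≤ ‖u‖ * ‖x‖ := real_inner_le_norm u x
    by_cases hcase : R₀ ≤ ‖x‖
    · have h1 := (hR₀ x hcase).trans hx
      rw [EReal.coe_le_coe_iff] at h1
      have : (0:ℝ) ≤ r := by linarith
      exact le_trans (min_le_left _ _) this
    · have h1 := (hminor x).trans hx
      rw [EReal.coe_le_coe_iff] at h1
      have hxb : ‖x‖ ≤ max R₀ 0 := le_trans (le_of_not_ge hcase) (le_max_left _ _)
      have h2 : (C₁ + ‖u‖) * ‖x‖ ≤ (C₁ + ‖u‖) * max R₀ 0 :=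
        mul_le_mul_of_nonneg_left hxb (by positivity)
      have : -(C₀ + (C₁ + ‖u‖) * max R₀ 0) ≤ r := by nlinarith
      exact le_trans (min_le_right _ _) this
  set μ : ℝ := sInf V with hμ
  -- μ + ⟪u,y⟫ is a lower bound for φ
  have hlow : ∀ y, ((μ + ⟪u, y⟫ : ℝ) : EReal) ≤ φ y := by
    intro y
    by_contra hy
    push_neg at hy
    have hyt : φ y ≠ ⊤ := fun h => by simp [h] at hy
    have hyr : φ y = (((φ y).toReal : ℝ) : EReal) := (EReal.coe_toReal hyt (hbot y)).symm
    rw [hyr, EReal.coe_lt_coe_iff] at hy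
    have hmem : (φ y).toReal - ⟪u, y⟫ ∈ V := by
      refine ⟨y, ?_⟩
      rw [hyr, EReal.coe_le_coe_iff]
      ring_nf
      exact le_refl _
    have := csInf_le hVbdd hmem
    rw [← hμ] at this
    linarith
  -- the sublevel-type sets
  set K : ℕ → Set H := fun n => {x | φ x ≤ ((μ + 1/(n+1) + ⟪u, x⟫ : ℝ) : EReal)} with hK
  have hKclosed : ∀ n, IsClosed (K n) := by
    intro n
    exact isClosed_le_of_lsc hlsc (continuous_const.add (continuous_const.inner continuous_id))
  have hKcvx : ∀ n, Convex ℝ (K n) := by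
    intro n x hx y hy a b ha hb hab
    simp only [hK, Set.mem_setOf_eq] at *
    calc φ (a • x + b • y) ≤ (a : EReal) * φ x + (b : EReal) * φ y := hconv x y a b ha hb hab
      _ ≤ (a : EReal) * ((μ + 1/(n+1) + ⟪u, x⟫ : ℝ) : EReal)
          + (b : EReal) * ((μ + 1/(n+1) + ⟪u, y⟫ : ℝ) : EReal) :=
        add_le_add (ereal_mul_le_mul ha hx) (ereal_mul_le_mul hb hy)
      _ = ((a * (μ + 1/(n+1) + ⟪u, x⟫) + b * (μ + 1/(n+1) + ⟪u, y⟫) : ℝ) : EReal) := by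
        rw [← EReal.coe_mul, ← EReal.coe_mul, ← EReal.coe_add]
      _ = ((μ + 1/(n+1) + ⟪u, a • x + b • y⟫ : ℝ) : EReal) := by
        congr 1
        rw [inner_add_right, real_inner_smul_right, real_inner_smul_right]
        have hba : b = 1 - a := by linarith
        rw [hba]; ring
  have hKne : ∀ n, (K n).Nonempty := by
    intro n
    have hpos : (0:ℝ) < 1/(n+1) := by positivity
    obtain ⟨r, hrV, hrlt⟩ := exists_lt_of_csInf_lt hVne (by rw [← hμ]; linarith : sInf V < μ + 1/(n+1))
    obtain ⟨x, hx⟩ := hrV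
    refine ⟨x, le_trans hx ?_⟩
    rw [EReal.coe_le_coe_iff]
    linarith
  have hKanti : ∀ n m : ℕ, n ≤ m → K m ⊆ K n := by
    intro n m hnm x hx
    simp only [hK, Set.mem_setOf_eq] at hx ⊢
    refine le_trans hx ?_
    rw [EReal.coe_le_coe_iff]
    have : (1:ℝ)/(m+1) ≤ 1/(n+1) := by
      apply one_div_le_one_div_of_le (by positivity)
      exact_mod_cast add_le_add_left (Nat.cast_le.2 hnm) 1
    linarith
  set R' : ℝ := max R₁ (μ + 1) with hR'
  have hKbdd : ∀ n, ∀ x ∈ K n, ‖x‖ ≤ R' := by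
    intro n x hx
    by_cases hcase : R₁ ≤ ‖x‖
    · have h1 := (hR₁ x hcase).trans hx
      rw [EReal.coe_le_coe_iff] at h1
      have hiu : ⟪u, x⟫ ≤ ‖u‖ * ‖x‖ := real_inner_le_norm u x
      have h2 : (1:ℝ)/(n+1) ≤ 1 := by
        rw [div_le_one (by positivity)]
        simp
      have : ‖x‖ ≤ μ + 1 := by nlinarith
      exact le_trans this (le_max_right _ _)
    · exact le_trans (le_of_not_ge hcase) (le_max_left _ _)
  -- minimal norm points
  have hex : ∀ n : ℕ, ∃ v ∈ K n, ‖(0:H) - v‖ = ⨅ w : K n, ‖(0:H) - w‖ := fun n =>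
    exists_norm_eq_iInf_of_complete_convex (hKne n) ((hKclosed n).isComplete) (hKcvx n) 0
  choose v hvK hvmin using hex
  set δ : ℕ → ℝ := fun n => ⨅ w : K n, ‖(0:H) - w‖ with hδ
  have hvnorm : ∀ n, ‖v n‖ = δ n := by
    intro n
    have := hvmin n
    rwa [zero_sub, norm_neg] at this
  have hδle : ∀ n, ∀ x ∈ K n, δ n ≤ ‖x‖ := by
    intro n x hx
    have : Nonempty (K n) := (hKne n).to_subtype
    have h1 : δ n ≤ ‖(0:H) - x‖ :=
      ciInf_le ⟨0, Set.forall_mem_range.2 fun _ => norm_nonneg _⟩ (⟨x, hx⟩ : K n)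
    rwa [zero_sub, norm_neg] at h1
  have hδnonneg : ∀ n, 0 ≤ δ n := fun n => (norm_nonneg _).trans_eq (hvnorm n)
  have hδmono : Monotone δ := by
    intro n m hnm
    calc δ n ≤ ‖v m‖ := hδle n (v m) (hKanti n m hnm (hvK m))
      _ = δ m := hvnorm m
  have hδbdd : ∀ n, δ n ≤ R' := fun n => (hvnorm n) ▸ hKbdd n (v n) (hvK n)
  set d : ℝ := ⨆ n, δ n with hd
  have hbddabove : BddAbove (Set.range δ) := ⟨R', Set.forall_mem_range.2 hδbdd⟩
  have hδd : ∀ n, δ n ≤ d := fun n => le_ciSup hbddabove n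
  have hδtend : Tendsto δ atTop (nhds d) := tendsto_atTop_ciSup hδmono hbddabove
  -- Cauchy
  set b : ℕ → ℝ := fun N => Real.sqrt (4 * (d^2 - δ N^2)) with hb
  have hcauchy : CauchySeq v := by
    apply cauchySeq_of_le_tendsto_0 b
    · intro n m N hn hm
      rw [dist_eq_norm]
      apply Real.le_sqrt_of_sq_le
      have hmid : (1/2 : ℝ) • v n + (1/2 : ℝ) • v m ∈ K N :=
        hKcvx N (hKanti N n hn (hvK n)) (hKanti N m hm (hvK m))
          (by norm_num) (by norm_num) (by norm_num)
      have h1 : δ N ≤ ‖(1/2 : ℝ) • v n + (1/2 : ℝ) • v m‖ := hδle N _ hmid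
      have h2 : ‖(1/2 : ℝ) • v n + (1/2 : ℝ) • v m‖ = ‖v n + v m‖ / 2 := by
        rw [← smul_add, norm_smul]
        simp [Real.norm_eq_abs]
        ring
      have hpar := parallelogram_law_with_norm ℝ (v n) (v m)
      have h3 : δ n ≤ d := hδd n
      have h4 : δ m ≤ d := hδd m
      have h5 : ‖v n‖ = δ n := hvnorm n
      have h6 : ‖v m‖ = δ m := hvnorm m
      have h7 : 0 ≤ δ N := hδnonneg N
      nlinarith [norm_nonneg (v n + v m), hδnonneg n, hδnonneg m, h1, h2, hpar]
    · have h0 : Tendsto (fun N => 4 * (d^2 - δ N^2)) atTop (nhds (4 * (d^2 - d^2))) := by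
        apply Tendsto.const_mul
        exact (tendsto_const_nhds.sub ((hδtend.pow 2)))
      rw [sub_self, mul_zero] at h0
      have := h0.sqrt
      rwa [Real.sqrt_zero] at this
  obtain ⟨xb, hxb⟩ := cauchySeq_tendsto_of_complete hcauchy
  have hxbK : ∀ n, xb ∈ K n := by
    intro n
    apply (hKclosed n).mem_of_tendsto hxb
    filter_upwards [eventually_ge_atTop n] with m hm
    exact hKanti n m hm (hvK m)
  -- φ xb = μ + ⟪u, xb⟫
  have hup : φ xb ≤ ((μ + ⟪u, xb⟫ : ℝ) : EReal) := by
    have htends : Tendsto (fun n : ℕ => ((μ + 1/(n+1) + ⟪u, xb⟫ : ℝ) : EReal)) atTop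
        (nhds ((μ + ⟪u, xb⟫ : ℝ) : EReal)) := by
      have h1 : Tendsto (fun n : ℕ => (1:ℝ)/(n+1)) atTop (nhds 0) :=
        tendsto_one_div_add_atTop_nhds_zero_nat
      have h2 : Tendsto (fun n : ℕ => μ + 1/(n+1) + ⟪u, xb⟫) atTop (nhds (μ + 0 + ⟪u, xb⟫)) :=
        Tendsto.add (Tendsto.add (tendsto_const_nhds : Tendsto (fun _ : ℕ => μ) atTop (nhds μ)) h1)
          (tendsto_const_nhds : Tendsto (fun _ : ℕ => ⟪u, xb⟫) atTop (nhds ⟪u, xb⟫))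
      rw [add_zero] at h2
      exact (continuous_coe_real_ereal.tendsto _).comp h2
    exact ge_of_tendsto' htends fun n => hxbK n
  have hfin : φ xb = ((μ + ⟪u, xb⟫ : ℝ) : EReal) := le_antisymm hup (hlow xb)
  refine ⟨xb, fun y => ?_⟩
  rw [hfin, ← EReal.coe_add]
  have harith : μ + ⟪u, xb⟫ + ⟪u, y - xb⟫ = μ + ⟪u, y⟫ := by
    rw [inner_sub_right]; ring
  rw [harith]
  exact hlow y
end

section
/- Let H be a real Hilbert space and φ : H → (−∞,∞] a proper lower semicontinuous uniformly convex function. Then φ is supercoercive. -/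
open scoped RealInnerProductSpace

private theorem quadN (A C Kr : ℝ) (hK : 0 < Kr) :
    ∃ N : ℕ, ∀ n : ℕ, N ≤ n → A * n + C ≤ Kr/4 * n * (n-1) := by
  refine ⟨⌈(4/Kr)*(|A| + |C|) + 2⌉₊, fun n hn => ?_⟩
  have h1 : (4/Kr)*(|A| + |C|) + 2 ≤ (n:ℝ) :=
    le_trans (Nat.le_ceil _) (by exact_mod_cast hn)
  have h2 : 0 < 4/Kr := by positivity
  have h3 : 0 ≤ (n:ℝ) := Nat.cast_nonneg n
  have hid : Kr/4 * ((4/Kr)*(|A|+|C|) + 1) = |A|+|C| + Kr/4 := by field_simp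
  have hn1 : (4/Kr)*(|A|+|C|) + 1 ≤ (n:ℝ) - 1 := by
    nlinarith [abs_nonneg A, abs_nonneg C]
  have step : |A|+|C| + Kr/4 ≤ Kr/4 * ((n:ℝ)-1) := by
    rw [← hid]; exact mul_le_mul_of_nonneg_left hn1 (by positivity)
  have m1 : (n:ℝ) * (|A|+|C|+Kr/4) ≤ (n:ℝ) * (Kr/4*((n:ℝ)-1)) :=
    mul_le_mul_of_nonneg_left step h3
  have hn2 : (2:ℝ) ≤ (n:ℝ) := by nlinarith [abs_nonneg A, abs_nonneg C]
  nlinarith [le_abs_self A, le_abs_self C, abs_nonneg C, abs_nonneg A,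
    mul_nonneg (by linarith : (0:ℝ) ≤ (n:ℝ)-1) (abs_nonneg C),
    mul_nonneg h3 (sub_nonneg.2 (le_abs_self A))]

set_option maxHeartbeats 1000000 in
theorem stmt10 {H : Type*} [NormedAddCommGroup H] [InnerProductSpace ℝ H] [CompleteSpace H]
    (φ : H → EReal)
    (hproper : ∃ x, φ x ≠ ⊤) (hbot : ∀ x, φ x ≠ ⊥)
    (hlsc : LowerSemicontinuous φ)
    (ϕ : ℝ → ENNReal)
    (hmono : ∀ s t : ℝ, 0 ≤ s → s ≤ t → ϕ s ≤ ϕ t)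
    (hzero : ϕ 0 = 0) (hpos : ∀ t : ℝ, 0 < t → ϕ t ≠ 0)
    (hu : ∀ x y : H, φ x ≠ ⊤ → φ y ≠ ⊤ → ∀ a : ℝ, a ∈ Set.Ioo (0 : ℝ) 1 →
      φ (a • x + (1 - a) • y) + ((a * (1 - a) : ℝ) : EReal) * ((ϕ ‖x - y‖ : ENNReal) : EReal)
        ≤ (a : EReal) * φ x + ((1 - a : ℝ) : EReal) * φ y) :
    ∀ M : ℝ, ∃ R : ℝ, ∀ x, R ≤ ‖x‖ → ((M * ‖x‖ : ℝ) : EReal) ≤ φ x := by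
  intro M
  obtain ⟨x₀, hx₀⟩ := hproper
  obtain ⟨B, hφx₀⟩ : ∃ B : ℝ, φ x₀ = (B : EReal) :=
    ⟨(φ x₀).toReal, (EReal.coe_toReal hx₀ (hbot x₀)).symm⟩
  -- lower semicontinuity ball
  have hc : ((B - 1 : ℝ) : EReal) < φ x₀ := by
    rw [hφx₀]; exact_mod_cast sub_lt_self B one_pos
  obtain ⟨r, hr0, hball⟩ : ∃ r > 0, ∀ y : H, ‖y - x₀‖ < r → ((B-1:ℝ):EReal) < φ y := by
    have h := hlsc x₀ _ hc
    rw [Metric.eventually_nhds_iff] at h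
    obtain ⟨ε, hε, hh⟩ := h
    exact ⟨ε, hε, fun y hy => hh (by rwa [dist_eq_norm])⟩
  -- convexity: segment points are finite
  have hseg : ∀ x : H, φ x ≠ ⊤ → ∀ a : ℝ, 0 ≤ a → a ≤ 1 →
      φ (a • x + (1 - a) • x₀) ≠ ⊤ := by
    intro x hx a ha0 ha1
    rcases eq_or_lt_of_le ha0 with h0 | h0
    · simpa [← h0] using hx₀
    rcases eq_or_lt_of_le ha1 with h1 | h1
    · simpa [h1] using hx
    have h := hu x x₀ hx hx₀ a ⟨h0, h1⟩
    have hle : φ (a • x + (1 - a) • x₀) ≤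
        (a : EReal) * φ x + ((1 - a : ℝ) : EReal) * φ x₀ := by
      refine le_trans (le_add_of_nonneg_right ?_) h
      exact mul_nonneg (by exact_mod_cast mul_nonneg ha0 (by linarith)) (EReal.coe_ennreal_nonneg _)
    rw [hφx₀, (EReal.coe_toReal hx (hbot x)).symm] at hle
    rw [← EReal.coe_mul, ← EReal.coe_mul, ← EReal.coe_add] at hle
    exact (hle.trans_lt (EReal.coe_lt_top _)).ne
  -- main case split on ϕ r
  by_cases hKt : ϕ r = ⊤
  · -- everything far from x₀ has φ = ⊤
    refine ⟨‖x₀‖ + r, fun x hx => ?_⟩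
    have ht : r ≤ ‖x - x₀‖ := by linarith [norm_sub_norm_le x x₀]
    have hxt : φ x = ⊤ := by
      by_contra hxf
      have h := hu x x₀ hxf hx₀ (1/2) ⟨by norm_num, by norm_num⟩
      have hϕt : ϕ ‖x - x₀‖ = ⊤ :=
        top_le_iff.1 (hKt ▸ hmono r _ hr0.le ht)
      rw [hϕt] at h
      have hLHS : φ ((1/2 : ℝ) • x + (1 - 1/2 : ℝ) • x₀)
          + ((1/2 * (1 - 1/2) : ℝ) : EReal) * ((⊤ : ENNReal) : EReal) = ⊤ := by
        rw [EReal.coe_ennreal_top, EReal.coe_mul_top_of_pos (by norm_num)]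
        exact EReal.add_top_of_ne_bot (hbot _)
      rw [hLHS] at h
      rw [hφx₀, (EReal.coe_toReal hxf (hbot x)).symm, ← EReal.coe_mul, ← EReal.coe_mul,
        ← EReal.coe_add] at h
      exact (not_le.2 (EReal.coe_lt_top _)) h
    rw [hxt]; exact le_top
  -- finite modulus case
  obtain ⟨Kr, hKrE⟩ : ∃ Kr : ℝ, ((ϕ r : ENNReal) : EReal) = ((Kr : ℝ) : EReal) := by
    refine ⟨(ϕ r).toReal, ?_⟩
    rw [← EReal.toReal_coe_ennreal]
    exact (EReal.coe_toReal (by simpa using hKt) (EReal.coe_ennreal_ne_bot _)).symm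
  have hKpos : 0 < Kr := by
    have := hpos r hr0
    have h0 : (0 : EReal) < ((ϕ r : ENNReal) : EReal) :=
      EReal.coe_ennreal_pos.2 (pos_iff_ne_zero.2 this)
    rw [hKrE] at h0
    exact_mod_cast h0
  -- midpoint inequality, real form
  have key : ∀ u v : H, φ u ≠ ⊤ → φ v ≠ ⊤ → r ≤ ‖u - v‖ →
      (φ ((1/2 : ℝ) • u + (1 - 1/2 : ℝ) • v)).toReal + Kr/4
        ≤ (φ u).toReal/2 + (φ v).toReal/2 := by
    intro u v huf hvf hd
    have hfu : φ u = (((φ u).toReal : ℝ) : EReal) := (EReal.coe_toReal huf (hbot u)).symm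
    have hfv : φ v = (((φ v).toReal : ℝ) : EReal) := (EReal.coe_toReal hvf (hbot v)).symm
    have h := hu u v huf hvf (1/2) ⟨by norm_num, by norm_num⟩
    set m := (1/2 : ℝ) • u + (1 - 1/2 : ℝ) • v with hm
    have hRHS : ((1/2 : ℝ) : EReal) * φ u + ((1 - 1/2 : ℝ) : EReal) * φ v
        = (((φ u).toReal/2 + (φ v).toReal/2 : ℝ) : EReal) := by
      rw [hfu, hfv, ← EReal.coe_mul, ← EReal.coe_mul, ← EReal.coe_add]
      rw [EReal.coe_eq_coe_iff, EReal.toReal_coe, EReal.toReal_coe]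
      ring
    rw [hRHS] at h
    have hmf : φ m ≠ ⊤ := by
      refine ((le_trans (le_add_of_nonneg_right ?_) h).trans_lt (EReal.coe_lt_top _)).ne
      exact mul_nonneg (by norm_num) (EReal.coe_ennreal_nonneg _)
    have hfm : φ m = (((φ m).toReal : ℝ) : EReal) := (EReal.coe_toReal hmf (hbot m)).symm
    have hKle : ((Kr : ℝ) : EReal) ≤ ((ϕ ‖u - v‖ : ENNReal) : EReal) := by
      rw [← hKrE]
      exact EReal.coe_ennreal_le_coe_ennreal_iff.2 (hmono r _ hr0.le hd)
    have hchain : (((φ m).toReal + Kr/4 : ℝ) : EReal)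
        ≤ (((φ u).toReal/2 + (φ v).toReal/2 : ℝ) : EReal) := by
      refine le_trans ?_ h
      have e1 : (((φ m).toReal + Kr/4 : ℝ) : EReal)
          = φ m + ((1/2 * (1 - 1/2) : ℝ) : EReal) * ((Kr : ℝ) : EReal) := by
        rw [← EReal.coe_mul]
        conv_rhs => rw [hfm]
        rw [← EReal.coe_add]
        exact EReal.coe_eq_coe_iff.2 (by ring)
      rw [e1]
      exact add_le_add le_rfl (mul_le_mul_of_nonneg_left hKle (by norm_num))
    exact_mod_cast hchain
  -- choose the threshold N
  obtain ⟨N, hN⟩ := quadN (|M| * r + 1) (|M| * ‖x₀‖ - B) Kr hKpos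
  refine ⟨‖x₀‖ + (N + 2) * r, fun x hx => ?_⟩
  by_cases hxf : φ x = ⊤
  · rw [hxf]; exact le_top
  -- setup
  set t : ℝ := ‖x - x₀‖ with htdef
  have htlb : ((N:ℝ) + 2) * r ≤ t := by
    have h1 := norm_sub_norm_le x x₀
    rw [← htdef] at h1
    linarith
  have htr : r ≤ t := by nlinarith [Nat.cast_nonneg (α := ℝ) N]
  have ht0 : 0 < t := lt_of_lt_of_le hr0 htr
  set n : ℕ := ⌊2 * t / r⌋₊ with hn
  have hdiv2 : 2 * t / r = 2 * (t/r) := by ring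
  have hn_le : (n : ℝ) ≤ 2 * t / r := Nat.floor_le (by positivity)
  have hn_gt : 2 * t / r - 1 < (n : ℝ) := Nat.sub_one_lt_floor _
  have htr_div : 1 ≤ t / r := (one_le_div hr0).2 htr
  have hn_lb : t / r < (n : ℝ) := by
    rw [hdiv2] at hn_gt; linarith
  have hn_pos : 0 < (n : ℝ) := lt_of_le_of_lt (by positivity) hn_lb
  have hnne : (n : ℝ) ≠ 0 := hn_pos.ne'
  have htn : t < r * n := by
    have := (div_lt_iff₀ hr0).1 hn_lb
    linarith
  have hσ_ge : r ≤ 2 * (t / (n:ℝ)) := by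
    have h1 : (n:ℝ) * r ≤ 2 * t := by
      have := (le_div_iff₀ hr0).1 hn_le
      linarith
    rw [show 2 * (t / (n:ℝ)) = (2*t) / (n:ℝ) by ring, le_div_iff₀ hn_pos]
    linarith
  have hσ_lt : t / (n:ℝ) < r := by
    rw [div_lt_iff₀ hn_pos]
    linarith
  have hNn : (N : ℝ) ≤ (n : ℝ) := by
    have : ((N:ℝ) + 2) ≤ t / r := by
      rw [le_div_iff₀ hr0]; linarith
    linarith
  have hNnat : N ≤ n := by exact_mod_cast hNn
  -- segment points
  set p : ℝ → H := fun s => (s / (n:ℝ)) • x + (1 - s / (n:ℝ)) • x₀ with hp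
  have hfin : ∀ s : ℝ, 0 ≤ s → s ≤ (n:ℝ) → φ (p s) ≠ ⊤ := by
    intro s hs0 hs1
    exact hseg x hxf (s / n) (by positivity) ((div_le_one hn_pos).2 hs1)
  set g : ℕ → ℝ := fun k => (φ (p (k:ℝ))).toReal with hg
  have hgf : ∀ k : ℕ, k ≤ n → φ (p (k:ℝ)) = ((g k : ℝ) : EReal) := by
    intro k hk
    exact (EReal.coe_toReal (hfin _ (Nat.cast_nonneg k) (by exact_mod_cast hk)) (hbot _)).symm
  have hsub : ∀ a b : ℝ, p a - p b = ((a - b) / (n:ℝ)) • (x - x₀) := by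
    intro a b
    simp only [hp]
    match_scalars <;> ring
  -- midpoint structure
  have hmid : ∀ k : ℕ, (1/2 : ℝ) • p ((k:ℝ)+2) + (1 - 1/2 : ℝ) • p (k:ℝ) = p ((k:ℝ)+1) := by
    intro k
    simp only [hp]
    match_scalars <;> (field_simp; try ring)
  have hmidineq : ∀ k : ℕ, k + 2 ≤ n → g (k+1) + Kr/4 ≤ g (k+2)/2 + g k/2 := by
    intro k hk
    have h2n : ((k:ℝ)+2) ≤ (n:ℝ) := by exact_mod_cast hk
    have h0k : (0:ℝ) ≤ (k:ℝ) := Nat.cast_nonneg k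
    have hd : r ≤ ‖p ((k:ℝ)+2) - p (k:ℝ)‖ := by
      rw [hsub]
      have : ((k:ℝ)+2 - (k:ℝ)) / (n:ℝ) = 2 / (n:ℝ) := by ring_nf
      rw [this, norm_smul]
      have h2 : ‖(2 / (n:ℝ) : ℝ)‖ = 2 / (n:ℝ) := by
        rw [Real.norm_eq_abs, abs_of_pos (by positivity)]
      rw [h2, ← htdef]
      calc r ≤ 2 * (t / (n:ℝ)) := hσ_ge
      _ = 2 / (n:ℝ) * t := by ring
    have h := key (p ((k:ℝ)+2)) (p (k:ℝ))
      (hfin _ (by linarith) h2n) (hfin _ h0k (by linarith)) hd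
    rw [hmid k] at h
    have e2 : ((k:ℕ)+2 : ℕ) = ((k:ℝ)+2 : ℝ) ∨ True := Or.inr trivial
    simp only [hg]
    push_cast
    convert h using 3 <;> push_cast <;> ring
  -- increments grow
  have hincr : ∀ k : ℕ, k + 1 ≤ n → g 1 - g 0 + k * (Kr/2) ≤ g (k+1) - g k := by
    intro k
    induction k with
    | zero => intro _; simp
    | succ k ih =>
      intro hk
      have h1 := ih (by omega)
      have h2 := hmidineq k (by omega)
      push_cast
      push_cast at h1
      linarith
  -- quadratic sum
  have hsum : ∀ k : ℕ, k ≤ n → g 0 + k * (g 1 - g 0) + Kr/4 * k * ((k:ℝ)-1) ≤ g k := by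
    intro k
    induction k with
    | zero => intro _; simp
    | succ k ih =>
      intro hk
      have h1 := ih (by omega)
      have h2 := hincr k hk
      have e : Kr/4 * ((k:ℝ)+1) * (((k:ℝ)+1)-1) = Kr/4 * (k:ℝ) * ((k:ℝ)-1) + (k:ℝ)*(Kr/2) := by
        ring
      push_cast
      linarith
  -- endpoint values
  have hp0 : p 0 = x₀ := by simp [hp]
  have hpn : p (n:ℝ) = x := by
    simp only [hp, div_self hnne]
    simp
  have hg0 : g 0 = B := by
    simp only [hg]
    rw [show ((0:ℕ):ℝ) = (0:ℝ) by norm_num, hp0, hφx₀]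
    simp [EReal.toReal_coe]
  have hg1 : B - 1 < g 1 := by
    have hd1 : ‖p 1 - x₀‖ < r := by
      rw [← hp0, hsub]
      have : ((1:ℝ) - 0) / (n:ℝ) = 1 / (n:ℝ) := by ring
      rw [this, norm_smul, Real.norm_eq_abs, abs_of_pos (by positivity), ← htdef]
      calc 1 / (n:ℝ) * t = t / (n:ℝ) := by ring
      _ < r := hσ_lt
    have hb := hball (p 1) hd1
    have h1n : (1:ℕ) ≤ n := by exact_mod_cast (by linarith : (1:ℝ) ≤ (n:ℝ))
    have hgf1 := hgf 1 h1n
    rw [Nat.cast_one] at hgf1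
    rw [hgf1] at hb
    exact_mod_cast hb
  have hgn : φ x = ((g n : ℝ) : EReal) := by
    rw [← hpn]; exact hgf n le_rfl
  -- final arithmetic
  rw [hgn]
  rw [EReal.coe_le_coe_iff]
  have hsn := hsum n le_rfl
  have hNq := hN n hNnat
  have hnorm : ‖x‖ ≤ t + ‖x₀‖ := by
    have := norm_le_norm_add_norm_sub' x x₀
    rw [← htdef] at this
    linarith [norm_sub_rev x x₀, norm_le_insert' x x₀]
  have hM1 : M * ‖x‖ ≤ |M| * ‖x‖ :=
    mul_le_mul_of_nonneg_right (le_abs_self M) (norm_nonneg x)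
  have hM2 : |M| * ‖x‖ ≤ |M| * (t + ‖x₀‖) :=
    mul_le_mul_of_nonneg_left hnorm (abs_nonneg M)
  have hM3 : |M| * t ≤ |M| * (r * n) :=
    mul_le_mul_of_nonneg_left htn.le (abs_nonneg M)
  have hposterm : 0 ≤ (n:ℝ) * (g 1 - B + 1) :=
    mul_nonneg hn_pos.le (by linarith)
  rw [hg0] at hsn
  have e2 : (n:ℝ) * (g 1 - B + 1) = (n:ℝ) * (g 1 - B) + (n:ℝ) := by ring
  have e3 : (|M| * r + 1) * (n:ℝ) = |M| * (r * (n:ℝ)) + (n:ℝ) := by ring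
  have e4 : |M| * (t + ‖x₀‖) = |M| * t + |M| * ‖x₀‖ := by ring
  linarith [hsn, hNq, hM1, hM2, hM3, hposterm, e2, e3, e4]
end

section
/- Let 𝓗 be a real Hilbert space, T : 𝓗 → 2^𝓗 maximally monotone, and suppose T = Q + G where Q is maximally monotone and 3* monotone and G is monotone with full domain, Lipschitzian, and surjective, and G is 3* monotone. Then T is surjective; in particular zer T ≠ ∅. -/
open scoped RealInnerProductSpace

/-- Monotonicity of a set-valued operator. -/
def MonOp {H : Type*} [NormedAddCommGroup H] [InnerProductSpace ℝ H]
    (A : H → Set H) : Prop :=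
  ∀ x y x' y', x' ∈ A x → y' ∈ A y → 0 ≤ ⟪x - y, x' - y'⟫

/-- Maximal monotonicity of a set-valued operator. -/
def MaxMonOp {H : Type*} [NormedAddCommGroup H] [InnerProductSpace ℝ H]
    (A : H → Set H) : Prop :=
  MonOp A ∧ ∀ x x', (∀ y y', y' ∈ A y → 0 ≤ ⟪x - y, x' - y'⟫) → x' ∈ A x

/-- 3* monotonicity (rectangularity) of a set-valued operator. -/
def Rect {H : Type*} [NormedAddCommGroup H] [InnerProductSpace ℝ H]
    (A : H → Set H) : Prop :=
  ∀ x : H, (∃ a, a ∈ A x) → ∀ xs : H, (∃ u, xs ∈ A u) →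
    ∃ M : ℝ, ∀ y ys : H, ys ∈ A y → ⟪x - y, ys - xs⟫ ≤ M

open Filter Topology

section BHhelpers

set_option linter.unusedSectionVars false

variable {H : Type*} [NormedAddCommGroup H] [InnerProductSpace ℝ H] [CompleteSpace H]

lemma inner_sub_sub (a b c d : H) : ⟪a - b, c - d⟫ = ⟪a,c⟫ - ⟪a,d⟫ - ⟪b,c⟫ + ⟪b,d⟫ := by
  simp [inner_sub_left, inner_sub_right]; ring

lemma inner_comb_left (a b c : H) (t : ℝ) : ⟪a + t•(b - a), c⟫ = (1-t)*⟪a,c⟫ + t*⟪b,c⟫ := by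
  simp [inner_add_left, inner_sub_left, real_inner_smul_left]; ring

lemma inner_comb_right (a b c : H) (t : ℝ) : ⟪c, a + t•(b - a)⟫ = (1-t)*⟪c,a⟫ + t*⟪c,b⟫ := by
  simp [inner_add_right, inner_sub_right, real_inner_smul_right]; ring

lemma norm_comb_sq (a b : H) (t : ℝ) :
    ‖a + t•(b-a)‖^2 = (1-t)*‖a‖^2 + t*‖b‖^2 - t*(1-t)*‖a-b‖^2 := by
  have h1 : ‖a + t•(b-a)‖^2 = ⟪a + t•(b-a), a + t•(b-a)⟫ := (real_inner_self_eq_norm_sq _).symm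
  have h2 : ‖a-b‖^2 = ⟪a-b,a-b⟫ := (real_inner_self_eq_norm_sq _).symm
  have h3 : ‖a‖^2 = ⟪a,a⟫ := (real_inner_self_eq_norm_sq _).symm
  have h4 : ‖b‖^2 = ⟪b,b⟫ := (real_inner_self_eq_norm_sq _).symm
  rw [h1,h2,h3,h4]
  simp only [inner_add_left, inner_add_right, inner_sub_left, inner_sub_right,
    real_inner_smul_left, real_inner_smul_right, real_inner_comm a b]
  ring

lemma graph_nonempty (S : H → Set H) (hS : MaxMonOp S) : ∃ p q, q ∈ S p := by
  by_contra h
  push_neg at h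
  exact h 0 0 (hS.2 0 0 (fun y y' hy => absurd hy (h y y')))

lemma eps_pos (n : ℕ) : (0:ℝ) < 1/(n+1) := by positivity

lemma tendsto_eps : Tendsto (fun n : ℕ => 1/((n:ℝ)+1)) atTop (𝓝 0) :=
  tendsto_one_div_add_atTop_nhds_zero_nat

set_option maxHeartbeats 1600000 in
/-- Minty-type theorem: a maximally monotone operator `S` admits `x` with `-x ∈ S x`. -/
lemma minty_neg (S : H → Set H) (hS : MaxMonOp S) : ∃ x : H, -x ∈ S x := by
  classical
  obtain ⟨p, q, hpq⟩ := graph_nonempty S hS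
  obtain ⟨Φ, hΦdef⟩ : ∃ Φ : H → H → H → H → ℝ,
      Φ = fun y ys x u => ⟪x,ys⟫ + ⟪y,u⟫ - ⟪y,ys⟫ + ‖x‖^2/2 + ‖u‖^2/2 := ⟨_, rfl⟩
  obtain ⟨A, hAdef⟩ : ∃ A : Set ℝ,
      A = {c | ∃ x u, ∀ y ys, ys ∈ S y → Φ y ys x u ≤ c} := ⟨_, rfl⟩
  have hAmem : ∀ c : ℝ, c ∈ A ↔ ∃ x u, ∀ y ys, ys ∈ S y → Φ y ys x u ≤ c := by
    intro c; rw [hAdef]; rfl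
  -- any graph point gives an element of A
  have hgr : ∀ a b, b ∈ S a → ∀ y ys, ys ∈ S y →
      Φ y ys a b ≤ ⟪a,b⟫ + ‖a‖^2/2 + ‖b‖^2/2 := by
    intro a b hab y ys hys
    have hm := hS.1 a y b ys hab hys
    rw [inner_sub_sub] at hm
    simp only [hΦdef]
    linarith
  have hAne : A.Nonempty := ⟨_, (hAmem _).2 ⟨p, q, hgr p q hpq⟩⟩
  have hAbdd : ∀ c ∈ A, 0 ≤ c := by
    intro c hc
    obtain ⟨x, u, hx⟩ := (hAmem c).1 hc
    by_cases hcase : ∀ y ys, ys ∈ S y → 0 ≤ ⟪x - y, u - ys⟫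
    · have hu : u ∈ S x := hS.2 x u hcase
      have h1 := hx x u hu
      simp only [hΦdef] at h1
      nlinarith [norm_add_sq_real x u, sq_nonneg ‖x + u‖]
    · push_neg at hcase
      obtain ⟨y, ys, hys, hlt⟩ := hcase
      have h1 := hx y ys hys
      rw [inner_sub_sub] at hlt
      simp only [hΦdef] at h1
      nlinarith [norm_add_sq_real x u, sq_nonneg ‖x + u‖]
  have hAbb : BddBelow A := ⟨0, fun c hc => hAbdd c hc⟩
  obtain ⟨μ, hμdef⟩ : ∃ μ : ℝ, μ = sInf A := ⟨_, rfl⟩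
  have hμle : ∀ c ∈ A, μ ≤ c := fun c hc => hμdef ▸ csInf_le hAbb hc
  have hμ0 : 0 ≤ μ := hμdef ▸ le_csInf hAne hAbdd
  -- minimizing sequence
  have hseq : ∀ n : ℕ, ∃ x u, ∀ y ys, ys ∈ S y → Φ y ys x u ≤ μ + 1/(n+1) := by
    intro n
    have hlt : sInf A < μ + 1/(n+1) := by
      rw [← hμdef]; have := eps_pos n; linarith
    obtain ⟨c, hcA, hclt⟩ := exists_lt_of_csInf_lt hAne hlt
    obtain ⟨x, u, h⟩ := (hAmem c).1 hcA
    exact ⟨x, u, fun y ys hys => (h y ys hys).trans hclt.le⟩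
  choose X U hXU using hseq
  -- midpoint estimate gives Cauchy
  have hmid : ∀ n m : ℕ, ‖X n - X m‖^2 + ‖U n - U m‖^2 ≤
      8 * ((μ + 1/(n+1) + (μ + 1/(m+1)))/2 - μ) := by
    intro n m
    have hmem : ((μ + 1/(n+1) + (μ + 1/(m+1)))/2
        - (‖X n - X m‖^2 + ‖U n - U m‖^2)/8) ∈ A := by
      refine (hAmem _).2 ⟨X n + (2⁻¹:ℝ) • (X m - X n), U n + (2⁻¹:ℝ) • (U m - U n),
        fun y ys hys => ?_⟩
      have h1 := hXU n y ys hys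
      have h2 := hXU m y ys hys
      simp only [hΦdef] at h1 h2 ⊢
      rw [inner_comb_left, inner_comb_right, norm_comb_sq, norm_comb_sq]
      have e1 : ‖X n - X m‖^2 = ‖X m - X n‖^2 := by rw [norm_sub_rev]
      have e2 : ‖U n - U m‖^2 = ‖U m - U n‖^2 := by rw [norm_sub_rev]
      rw [e1, e2]; linarith
    have := hμle _ hmem
    linarith
  have hcauaux : ∀ (V : ℕ → H), (∀ n m : ℕ, ‖V n - V m‖^2 ≤
      8 * ((μ + 1/(n+1) + (μ + 1/(m+1)))/2 - μ)) → CauchySeq V := by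
    intro V hV
    rw [Metric.cauchySeq_iff']
    intro ε hε
    obtain ⟨N, hN⟩ := exists_nat_gt (8/ε^2)
    refine ⟨N, fun n hn => ?_⟩
    have h1 := hV n N
    have h2 : (1:ℝ)/(n+1) ≤ 1/(N+1) := by
      apply one_div_le_one_div_of_le (by positivity)
      exact_mod_cast by omega
    have h3 : 8 * (1/((N:ℝ)+1)) < ε^2 := by
      have hN1 : (8:ℝ)/ε^2 < (N:ℝ) + 1 := hN.trans (by linarith)
      rw [div_lt_iff₀ (by positivity)] at hN1
      rw [mul_one_div, div_lt_iff₀ (by positivity)]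
      nlinarith
    have h4 : ‖V n - V N‖^2 < ε^2 := by linarith
    rw [dist_eq_norm]
    nlinarith [norm_nonneg (V n - V N), hε]
  have hXc : CauchySeq X := hcauaux X (fun n m => by nlinarith [hmid n m, sq_nonneg ‖U n - U m‖])
  have hUc : CauchySeq U := hcauaux U (fun n m => by nlinarith [hmid n m, sq_nonneg ‖X n - X m‖])
  obtain ⟨xb, hxb⟩ := cauchySeq_tendsto_of_complete hXc
  obtain ⟨ub, hub⟩ := cauchySeq_tendsto_of_complete hUc
  -- the limit satisfies the bound with constant μ
  have hlimbd : ∀ y ys, ys ∈ S y → Φ y ys xb ub ≤ μ := by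
    intro y ys hys
    have ht1 : Tendsto (fun n => Φ y ys (X n) (U n)) atTop (𝓝 (Φ y ys xb ub)) := by
      simp only [hΦdef]
      have hin1 : Tendsto (fun n => ⟪X n, ys⟫) atTop (𝓝 ⟪xb, ys⟫) :=
        hxb.inner tendsto_const_nhds
      have hin2 : Tendsto (fun n => ⟪y, U n⟫) atTop (𝓝 ⟪y, ub⟫) :=
        tendsto_const_nhds.inner hub
      have hn1 : Tendsto (fun n => ‖X n‖^2/2) atTop (𝓝 (‖xb‖^2/2)) :=
        ((hxb.norm.pow 2).div_const 2)
      have hn2 : Tendsto (fun n => ‖U n‖^2/2) atTop (𝓝 (‖ub‖^2/2)) :=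
        ((hub.norm.pow 2).div_const 2)
      exact (((hin1.add hin2).sub tendsto_const_nhds).add hn1).add hn2
    have ht2 : Tendsto (fun n : ℕ => μ + 1/((n:ℝ)+1)) atTop (𝓝 μ) := by
      simpa using tendsto_const_nhds.add tendsto_eps
    exact le_of_tendsto_of_tendsto' ht1 ht2 (fun n => hXU n y ys hys)
  -- strong convexity at the minimizer vs graph points
  have hkey : ∀ y ys, ys ∈ S y →
      (‖xb - y‖^2 + ‖ub - ys‖^2)/2 ≤ (⟪y,ys⟫ + ‖y‖^2/2 + ‖ys‖^2/2) - μ := by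
    intro y ys hys
    obtain ⟨cw, hcw⟩ : ∃ cw : ℝ, cw = ⟪y,ys⟫ + ‖y‖^2/2 + ‖ys‖^2/2 := ⟨_, rfl⟩
    obtain ⟨D, hD⟩ : ∃ D : ℝ, D = ‖xb - y‖^2 + ‖ub - ys‖^2 := ⟨_, rfl⟩
    rw [← hcw, ← hD]
    have hDnn : 0 ≤ D := by rw [hD]; positivity
    have hstep : ∀ t : ℝ, 0 < t → t < 1 → (1-t)*(D/2) ≤ cw - μ := by
      intro t ht0 ht1
      have hmem : ((1-t)*μ + t*cw - t*(1-t)*(D/2)) ∈ A := by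
        refine (hAmem _).2 ⟨xb + t • (y - xb), ub + t • (ys - ub), fun y' ys' hys' => ?_⟩
        have h1 := hlimbd y' ys' hys'
        have h2 := hgr y ys hys y' ys' hys'
        rw [← hcw] at h2
        have hid : Φ y' ys' (xb + t • (y - xb)) (ub + t • (ys - ub)) =
            (1-t)*Φ y' ys' xb ub + t*Φ y' ys' y ys - t*(1-t)*(D/2) := by
          simp only [hΦdef, hD]
          rw [inner_comb_left, inner_comb_right, norm_comb_sq, norm_comb_sq]
          ring
        rw [hid]
        have h1' := mul_le_mul_of_nonneg_left h1 (by linarith : (0:ℝ) ≤ 1 - t)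
        have h2' := mul_le_mul_of_nonneg_left h2 ht0.le
        linarith
      have hle := hμle _ hmem
      have h9 : 0 ≤ t*((cw - μ) - (1-t)*(D/2)) := by nlinarith [hle]
      nlinarith [h9, ht0]
    -- let t → 0
    have htend : Tendsto (fun k : ℕ => (1 - 1/((k:ℝ)+2))*(D/2)) atTop (𝓝 (D/2)) := by
      have h0 : Tendsto (fun k : ℕ => 1/((k:ℝ)+2)) atTop (𝓝 0) := by
        have h := tendsto_eps.comp (tendsto_add_atTop_nat 1)
        refine h.congr fun k => ?_
        simp only [Function.comp]
        push_cast
        ring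
      have h1t : Tendsto (fun k : ℕ => (1:ℝ) - 1/((k:ℝ)+2)) atTop (𝓝 (1 - 0)) :=
        Tendsto.sub tendsto_const_nhds h0
      have h2t := h1t.mul_const (D/2)
      simpa using h2t
    refine le_of_tendsto htend (Filter.Eventually.of_forall fun k => ?_)
    refine hstep _ (by positivity) ?_
    rw [div_lt_one (by positivity)]
    linarith [Nat.cast_nonneg (α := ℝ) k]
  -- conclude
  have hrel : ∀ y ys, ys ∈ S y → 0 ≤ ⟪-ub - y, -xb - ys⟫ := by
    intro y ys hys
    have h1 := hkey y ys hys
    rw [inner_sub_sub]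
    have e1 := norm_sub_sq_real xb y
    have e2 := norm_sub_sq_real ub ys
    have e3 := norm_add_sq_real xb ub
    have e4 : ⟪-ub, -xb⟫ = ⟪xb, ub⟫ := by
      rw [inner_neg_neg]; exact real_inner_comm _ _
    have e5 : ⟪-ub, ys⟫ = -⟪ub, ys⟫ := by simp
    have e6 : ⟪y, -xb⟫ = -⟪xb, y⟫ := by rw [inner_neg_right, real_inner_comm]
    nlinarith [sq_nonneg ‖xb + ub‖]
  have hin : -xb ∈ S (-ub) := hS.2 (-ub) (-xb) hrel
  have hfin := hkey (-ub) (-xb) hin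
  have e1 : ‖xb - -ub‖^2 = ‖xb + ub‖^2 := by rw [sub_neg_eq_add]
  have e2 : ‖ub - -xb‖^2 = ‖xb + ub‖^2 := by rw [sub_neg_eq_add, add_comm ub xb]
  have e4 : ⟪-ub, -xb⟫ = ⟪xb, ub⟫ := by rw [inner_neg_neg]; exact real_inner_comm _ _
  rw [e1, e2, e4] at hfin
  have e3 := norm_add_sq_real xb ub
  have hzero : ‖xb + ub‖^2 ≤ 0 := by
    simp only [norm_neg] at hfin; linarith
  have hz : xb + ub = 0 := by
    have h5 : ‖xb + ub‖ ≤ 0 := by nlinarith [norm_nonneg (xb + ub)]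
    have h6 : ‖xb + ub‖ = 0 := le_antisymm h5 (norm_nonneg _)
    exact norm_eq_zero.mp h6
  have hub2 : -ub = xb := by
    have h7 : xb = -ub := by
      rw [eq_neg_iff_add_eq_zero]; exact hz
    exact h7.symm
  exact ⟨xb, by rwa [hub2] at hin⟩


lemma minty_reg (T : H → Set H) (hT : MaxMonOp T) (w : H) (ε : ℝ) (hε : 0 < ε) :
    ∃ x, w - ε • x ∈ T x := by
  obtain ⟨S, hSdef⟩ : ∃ S : H → Set H, S = fun y => {z | ε • z + w ∈ T y} := ⟨_, rfl⟩
  have hSmem : ∀ y z, z ∈ S y ↔ ε • z + w ∈ T y := by intro y z; rw [hSdef]; rfl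
  have hS : MaxMonOp S := by
    constructor
    · intro x y x' y' hx hy
      have hm := hT.1 x y (ε•x'+w) (ε•y'+w) ((hSmem x x').1 hx) ((hSmem y y').1 hy)
      have he : (ε•x'+w) - (ε•y'+w) = ε•(x'-y') := by
        rw [smul_sub]; abel
      rw [he, real_inner_smul_right] at hm
      nlinarith
    · intro x x' h
      refine (hSmem x x').2 (hT.2 x (ε•x'+w) (fun y y' hy' => ?_))
      have hmem : ε⁻¹ • (y' - w) ∈ S y := by
        refine (hSmem _ _).2 ?_
        rw [smul_smul, mul_inv_cancel₀ hε.ne', one_smul, sub_add_cancel]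
        exact hy'
      have h1 := h y _ hmem
      have he : (ε•x'+w) - y' = ε • (x' - ε⁻¹ • (y' - w)) := by
        rw [smul_sub, smul_smul, mul_inv_cancel₀ hε.ne', one_smul]
        abel
      rw [he, real_inner_smul_right]
      exact mul_nonneg hε.le h1
  obtain ⟨x, hx⟩ := minty_neg S hS
  refine ⟨x, ?_⟩
  have := (hSmem x (-x)).1 hx
  rwa [smul_neg, neg_add_eq_sub] at this

end BHhelpers

theorem stmt16 {H : Type*} [NormedAddCommGroup H] [InnerProductSpace ℝ H] [CompleteSpace H]
    (Q : H → Set H) (G : H → H) (T : H → Set H)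
    (hT : ∀ x, T x = (fun q => q + G x) '' Q x)
    (hTmax : MaxMonOp T)
    (hQmax : MaxMonOp Q) (hQrect : Rect Q)
    (hGmono : ∀ x y, 0 ≤ ⟪x - y, G x - G y⟫)
    (hGlip : ∃ c : NNReal, LipschitzWith c G)
    (hGsurj : Function.Surjective G)
    (hGrect : Rect (fun x => {G x})) :
    (∀ u : H, ∃ x : H, u ∈ T x) ∧ ∃ x : H, (0 : H) ∈ T x := by
  have main : ∀ u : H, ∃ x : H, u ∈ T x := by
    intro w
    obtain ⟨p, qs, hpq⟩ := graph_nonempty Q hQmax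
    have hexn : ∀ n : ℕ, ∃ x, w - (1/((n:ℝ)+1)) • x ∈ T x :=
      fun n => minty_reg T hTmax w _ (eps_pos n)
    choose X hX using hexn
    have hdec : ∀ n : ℕ, ∃ qn, qn ∈ Q (X n) ∧ qn + G (X n) = w - (1/((n:ℝ)+1)) • X n := by
      intro n
      have h := hX n
      rw [hT] at h
      obtain ⟨qn, hqn, heq⟩ := h
      exact ⟨qn, hqn, heq⟩
    choose qn hqn hqeq using hdec
    obtain ⟨M₁, hM₁⟩ := hQrect p ⟨qs, hpq⟩ qs ⟨p, hpq⟩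
    -- pointwise weak boundedness
    have hpt : ∀ v : H, ∃ C, ∀ n, ⟪X n - p, v⟫ ≤ C := by
      intro v
      obtain ⟨r, hr⟩ := hGsurj (w + v - qs)
      obtain ⟨M₂, hM₂⟩ := hGrect p ⟨G p, rfl⟩ (w + v - qs) ⟨r, hr.symm⟩
      refine ⟨M₁ + M₂ + ‖p‖^2/4, fun n => ?_⟩
      have h1 := hM₁ (X n) (qn n) (hqn n)
      have h2 := hM₂ (X n) (G (X n)) rfl
      have hsum : ⟪p - X n, (qn n - qs) + (G (X n) - (w + v - qs))⟫ ≤ M₁ + M₂ := by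
        rw [inner_add_right]; linarith
      have heq : (qn n - qs) + (G (X n) - (w + v - qs)) = -((1/((n:ℝ)+1)) • X n) - v := by
        rw [show qn n - qs + (G (X n) - (w + v - qs)) = qn n + G (X n) - w - v by abel,
          hqeq n]
        abel
      rw [heq, inner_sub_right, inner_neg_right, real_inner_smul_right] at hsum
      have hflip : ⟪X n - p, v⟫ = -⟪p - X n, v⟫ := by
        rw [← inner_neg_left, neg_sub]
      have hs0 : (0:ℝ) < 1/((n:ℝ)+1) := eps_pos n
      have hs1 : (1:ℝ)/((n:ℝ)+1) ≤ 1 := by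
        rw [div_le_one (by positivity)]
        linarith [Nat.cast_nonneg (α := ℝ) n]
      have hCS : ⟪p, X n⟫ ≤ ‖p‖ * ‖X n‖ := real_inner_le_norm p (X n)
      have hexp : ⟪p - X n, X n⟫ = ⟪p, X n⟫ - ‖X n‖^2 := by
        rw [inner_sub_left, real_inner_self_eq_norm_sq]
      rw [hflip]
      have hb : (1/((n:ℝ)+1)) * ⟪p - X n, X n⟫ ≤ ‖p‖^2/4 := by
        rw [hexp]
        have h4 : ⟪p, X n⟫ - ‖X n‖^2 ≤ ‖p‖^2/4 := by
          nlinarith [sq_nonneg (‖p‖ - 2*‖X n‖), norm_nonneg (X n), norm_nonneg p]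
        rcases le_or_gt (⟪p, X n⟫ - ‖X n‖^2) 0 with hc | hc
        · nlinarith [sq_nonneg ‖p‖]
        · nlinarith
      linarith
    -- Banach–Steinhaus: the X n are uniformly bounded
    have hfam : ∀ v : H, ∃ C, ∀ n : ℕ, ‖(innerSL ℝ (X n - p)) v‖ ≤ C := by
      intro v
      obtain ⟨C1, h1⟩ := hpt v
      obtain ⟨C2, h2⟩ := hpt (-v)
      refine ⟨max C1 C2, fun n => ?_⟩
      have h2' := h2 n
      rw [inner_neg_right] at h2'
      simp only [innerSL_apply_apply, Real.norm_eq_abs]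
      rw [abs_le]
      constructor
      · have := le_max_right C1 C2; linarith
      · exact (h1 n).trans (le_max_left C1 C2)
    obtain ⟨C', hC'⟩ := banach_steinhaus hfam
    obtain ⟨R, hR⟩ : ∃ R : ℝ, ∀ n, ‖X n‖ ≤ R := by
      refine ⟨C' + ‖p‖, fun n => ?_⟩
      have h := hC' n
      rw [innerSL_apply_norm] at h
      calc ‖X n‖ = ‖X n - p + p‖ := by rw [sub_add_cancel]
        _ ≤ ‖X n - p‖ + ‖p‖ := norm_add_le _ _
        _ ≤ C' + ‖p‖ := by linarith
    -- monotonicity between indices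
    have hmono2 : ∀ n m : ℕ, ⟪X n - X m, (1/((n:ℝ)+1)) • X n - (1/((m:ℝ)+1)) • X m⟫ ≤ 0 := by
      intro n m
      have h := hTmax.1 (X n) (X m) _ _ (hX n) (hX m)
      have he : (w - (1/((n:ℝ)+1)) • X n) - (w - (1/((m:ℝ)+1)) • X m)
          = -((1/((n:ℝ)+1)) • X n - (1/((m:ℝ)+1)) • X m) := by abel
      rw [he, inner_neg_right] at h
      linarith
    -- norms are monotone, differences controlled
    have hii : ∀ m n : ℕ, m ≤ n → ‖X n - X m‖^2 ≤ ‖X n‖^2 - ‖X m‖^2 := by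
      intro m n hmn
      rcases eq_or_lt_of_le hmn with heq | hlt
      · subst heq; simp
      · have h := hmono2 n m
        have hst : (1:ℝ)/((n:ℝ)+1) < 1/((m:ℝ)+1) := by
          apply one_div_lt_one_div_of_lt (by positivity)
          have : (m:ℝ) < n := by exact_mod_cast hlt
          linarith
        have hs0 : (0:ℝ) < 1/((n:ℝ)+1) := eps_pos n
        have hexp : ⟪X n - X m, (1/((n:ℝ)+1)) • X n - (1/((m:ℝ)+1)) • X m⟫
            = (1/((n:ℝ)+1)) * ⟪X n, X n⟫ - (1/((m:ℝ)+1)) * ⟪X n, X m⟫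
              - (1/((n:ℝ)+1)) * ⟪X m, X n⟫ + (1/((m:ℝ)+1)) * ⟪X m, X m⟫ := by
          rw [inner_sub_left, inner_sub_right, inner_sub_right,
            real_inner_smul_right, real_inner_smul_right,
            real_inner_smul_right, real_inner_smul_right]
          ring
        rw [hexp] at h
        have hcomm : ⟪X m, X n⟫ = ⟪X n, X m⟫ := real_inner_comm _ _
        have hAA : ⟪X n, X n⟫ = ‖X n‖^2 := real_inner_self_eq_norm_sq _
        have hBB : ⟪X m, X m⟫ = ‖X m‖^2 := real_inner_self_eq_norm_sq _
        rw [hcomm, hAA, hBB] at h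
        have hns := norm_sub_sq_real (X n) (X m)
        -- s‖a-b‖² ≤ (t-s)(c-B)
        have hA : (1/((n:ℝ)+1)) * ‖X n - X m‖^2
            ≤ ((1/((m:ℝ)+1)) - (1/((n:ℝ)+1))) * (⟪X n, X m⟫ - ‖X m‖^2) := by
          nlinarith [hns]
        have hcB : ‖X m‖^2 ≤ ⟪X n, X m⟫ := by
          nlinarith [sq_nonneg ‖X n - X m‖, hs0, hst]
        nlinarith [hns]
    obtain ⟨L, hL⟩ : ∃ L, Tendsto (fun n => ‖X n‖^2) atTop (𝓝 L) := by
      have hrmono : Monotone (fun n => ‖X n‖^2) := by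
        intro m n hmn
        have := hii m n hmn
        have := sq_nonneg ‖X n - X m‖
        simp only
        linarith
      refine ⟨_, tendsto_atTop_ciSup hrmono ⟨R^2, ?_⟩⟩
      rintro x ⟨n, rfl⟩
      simp only
      nlinarith [hR n, norm_nonneg (X n)]
    have hle_L : ∀ n, ‖X n‖^2 ≤ L := by
      intro n
      refine Monotone.ge_of_tendsto ?_ hL n
      intro a b hab
      have := hii a b hab
      have := sq_nonneg ‖X b - X a‖
      simp only
      linarith
    have hXc : CauchySeq X := by
      rw [Metric.cauchySeq_iff']
      intro ε hε
      obtain ⟨N, hN⟩ := (Metric.tendsto_atTop.1 hL) (ε^2) (by positivity)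
      refine ⟨N, fun n hn => ?_⟩
      have h1 := hii N n hn
      have h2 := hN N le_rfl
      rw [Real.dist_eq, abs_lt] at h2
      have h3 : ‖X n - X N‖^2 < ε^2 := by
        have := hle_L n
        linarith
      rw [dist_eq_norm]
      nlinarith [norm_nonneg (X n - X N)]
    obtain ⟨xb, hxb⟩ := cauchySeq_tendsto_of_complete hXc
    refine ⟨xb, hTmax.2 xb w (fun y y' hy' => ?_)⟩
    have hn : ∀ n : ℕ, (1/((n:ℝ)+1)) * ⟪X n - y, X n⟫ ≤ ⟪X n - y, w - y'⟫ := by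
      intro n
      have h0 := hTmax.1 (X n) y _ y' (hX n) hy'
      have he : (w - (1/((n:ℝ)+1)) • X n) - y' = (w - y') - (1/((n:ℝ)+1)) • X n := by abel
      rw [he, inner_sub_right, real_inner_smul_right] at h0
      linarith
    have tX : Tendsto (fun n => ⟪X n - y, w - y'⟫) atTop (𝓝 ⟪xb - y, w - y'⟫) :=
      (hxb.sub tendsto_const_nhds).inner tendsto_const_nhds
    have tR : Tendsto (fun n : ℕ => (1/((n:ℝ)+1)) * ⟪X n - y, X n⟫) atTop (𝓝 0) := by
      have h := tendsto_one_div_add_atTop_nhds_zero_nat.mul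
        ((hxb.sub (tendsto_const_nhds (x := y))).inner (𝕜 := ℝ) hxb)
      simpa using h
    exact le_of_tendsto_of_tendsto' tR tX hn
  exact ⟨main, (main 0).imp (fun x h => h)⟩
end
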